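/- arXiv:1212.5888 — 5 statements merged into one kernel-verified Lean document; each statement's English description precedes it below -/
import Mathlib

section
/- If X : [0,T] → ℝ^d is a càdlàg path of finite p-variation for some p ∈ [1,2) and Y : [0,T] → ℝ^d is a càdlàg path of finite p-variation, then the limits over refinements of partitions of the Riemann sums ∑ Y_s (X_t - X_s) and ∑ Y_{s-} (X_t - X_s) (sums over intervals [s,t] of the partition, left endpoint evaluation) are equal whenever they exist. -/
open scoped BigOperators
open MeasureTheory

noncomputable section

def IsPartition (a b : ℝ) (P : Finset ℝ) : Prop :=
  a ∈ P ∧ b ∈ P ∧ ∀ x ∈ P, x ∈ Set.Icc a b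

noncomputable def nextPt (P : Finset ℝ) (b x : ℝ) : ℝ :=
  WithBot.unbotD b (P.filter (fun y => x < y)).min

noncomputable def varSum {E : Type*} [NormedAddCommGroup E] (X : ℝ → E) (p b : ℝ)
    (P : Finset ℝ) : ℝ :=
  ∑ x ∈ P.erase b, ‖X (nextPt P b x) - X x‖ ^ p

def HasFiniteVar {E : Type*} [NormedAddCommGroup E] (X : ℝ → E) (p a b : ℝ) : Prop :=
  ∃ M : ℝ, ∀ P : Finset ℝ, IsPartition a b P → varSum X p b P ≤ M

noncomputable def varNorm {E : Type*} [NormedAddCommGroup E] (X : ℝ → E) (p a b : ℝ) : ℝ :=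
  (sSup {v | ∃ P : Finset ℝ, IsPartition a b P ∧ v = varSum X p b P}) ^ (1 / p)

def Cadlag {E : Type*} [NormedAddCommGroup E] (X : ℝ → E) (a b : ℝ) : Prop :=
  (∀ t ∈ Set.Ico a b, Filter.Tendsto X (nhdsWithin t (Set.Ici t)) (nhds (X t))) ∧
  (∀ t ∈ Set.Ioc a b, ∃ L : E, Filter.Tendsto X (nhdsWithin t (Set.Iio t)) (nhds L))

noncomputable def minus {E : Type*} [NormedAddCommGroup E] (X : ℝ → E) (a t : ℝ) : E :=
  if t ≤ a then X a else Function.leftLim X t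

noncomputable def jump {E : Type*} [NormedAddCommGroup E] (X : ℝ → E) (a t : ℝ) : E :=
  X t - minus X a t

def RRSTendsto {E : Type*} [NormedAddCommGroup E] (a b : ℝ) (S : Finset ℝ → E) (L : E) : Prop :=
  ∀ ε > 0, ∃ P₀ : Finset ℝ, IsPartition a b P₀ ∧
    ∀ P : Finset ℝ, IsPartition a b P → P₀ ⊆ P → ‖S P - L‖ < ε


noncomputable def riemannSum {d : ℕ} (Y X : ℝ → EuclideanSpace ℝ (Fin d)) (b : ℝ)
    (P : Finset ℝ) : Fin d → Fin d → ℝ :=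
  ∑ x ∈ P.erase b, fun i j => Y x i * (X (nextPt P b x) j - X x j)

/-!
The two Riemann sums differ by `∑ ΔY_s ⊗ (X_t - X_s)`, where `ΔY_s = Y_s - Y_{s-}` is the jump
of `Y`. Refine a given partition by one point `c` in each interval `[s, t]`, taken so close to `s`
that `‖ΔY_s‖ ‖X_c - X_s‖` is small (right continuity of `X`) and with `‖ΔY_c‖` small. Such points
exist because a path of finite `p`-variation cannot have jumps of size `≥ η` all over an interval:
the left limits would produce arbitrarily many disjoint increments of size `> η / 2`. So along
refinements the difference of the sums becomes arbitrarily small, and the two limits coincide.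
-/

open Filter Set Topology

section NextPt

variable {P : Finset ℝ} {a b x : ℝ}

lemma nextPt_spec (h : (P.filter (x < ·)).Nonempty) :
    nextPt P b x ∈ P ∧ x < nextPt P b x ∧ ∀ z ∈ P, x < z → nextPt P b x ≤ z := by
  have hn : nextPt P b x = (P.filter (x < ·)).min' h := by
    rw [nextPt, ← Finset.coe_min' h]; rfl
  obtain ⟨hmem, hlt⟩ := Finset.mem_filter.1 (Finset.min'_mem _ h)
  exact ⟨hn ▸ hmem, hn ▸ hlt, fun z hz hxz => hn ▸ Finset.min'_le _ _ (by simp [hz, hxz])⟩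

lemma nextPt_eq {y : ℝ} (hy : y ∈ P) (hxy : x < y) (hmin : ∀ z ∈ P, x < z → y ≤ z) :
    nextPt P b x = y := by
  obtain ⟨h₁, h₂, h₃⟩ := nextPt_spec (b := b) ⟨y, Finset.mem_filter.2 ⟨hy, hxy⟩⟩
  exact le_antisymm (h₃ y hy hxy) (hmin _ h₁ h₂)

lemma IsPartition.nextPt_spec (hP : IsPartition a b P) (hx : x ∈ P.erase b) :
    nextPt P b x ∈ P ∧ x < nextPt P b x ∧ ∀ z ∈ P, x < z → nextPt P b x ≤ z := by
  have hxb : x < b := lt_of_le_of_ne (hP.2.2 x (Finset.mem_of_mem_erase hx)).2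
    (Finset.ne_of_mem_erase hx)
  exact _root_.nextPt_spec ⟨b, Finset.mem_filter.2 ⟨hP.2.1, hxb⟩⟩

lemma IsPartition.union (hP : IsPartition a b P) {Q : Finset ℝ} (hQ : IsPartition a b Q) :
    IsPartition a b (P ∪ Q) :=
  ⟨Finset.mem_union_left _ hP.1, Finset.mem_union_left _ hP.2.1,
    fun x hx => (Finset.mem_union.1 hx).elim (hP.2.2 x) (hQ.2.2 x)⟩

end NextPt

section Variation

variable {E : Type*} [NormedAddCommGroup E] {Z : ℝ → E} {p a b : ℝ}

lemma exists_isPartition_sum_le_varSum (hab : a ≤ b) (I : Finset (ℝ × ℝ))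
    (hI : ∀ q ∈ I, a ≤ q.1 ∧ q.1 < q.2 ∧ q.2 ≤ b)
    (hdisj : (I : Set (ℝ × ℝ)).Pairwise fun q r => q.2 ≤ r.1 ∨ r.2 ≤ q.1) :
    ∃ P, IsPartition a b P ∧ ∑ q ∈ I, ‖Z q.2 - Z q.1‖ ^ p ≤ varSum Z p b P := by
  classical
  set P := insert a (insert b (I.image Prod.fst ∪ I.image Prod.snd))
  have hfst : ∀ q ∈ I, q.1 ∈ P := fun q hq => Finset.mem_insert_of_mem
    (Finset.mem_insert_of_mem (Finset.mem_union_left _ (Finset.mem_image_of_mem _ hq)))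
  have hsnd : ∀ q ∈ I, q.2 ∈ P := fun q hq => Finset.mem_insert_of_mem
    (Finset.mem_insert_of_mem (Finset.mem_union_right _ (Finset.mem_image_of_mem _ hq)))
  have hP : IsPartition a b P := by
    refine ⟨by simp [P], by simp [P], fun z hz => ?_⟩
    simp only [P, Finset.mem_insert, Finset.mem_union, Finset.mem_image] at hz
    rcases hz with rfl | rfl | ⟨q, hq, rfl⟩ | ⟨q, hq, rfl⟩
    · exact ⟨le_rfl, hab⟩
    · exact ⟨hab, le_rfl⟩
    all_goals have := hI q hq; constructor <;> linarith
  have hnext : ∀ q ∈ I, nextPt P b q.1 = q.2 := by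
    intro q hq
    refine nextPt_eq (hsnd q hq) (hI q hq).2.1 fun z hz hqz => ?_
    simp only [P, Finset.mem_insert, Finset.mem_union, Finset.mem_image] at hz
    rcases hz with rfl | rfl | ⟨r, hr, rfl⟩ | ⟨r, hr, rfl⟩
    · linarith [(hI q hq).1]
    · exact (hI q hq).2.2
    all_goals
      rcases eq_or_ne q r with rfl | hqr
      · linarith
      · have := hI r hr
        rcases hdisj hq hr hqr with h | h <;> linarith
  have hinj : Set.InjOn Prod.fst (I : Set (ℝ × ℝ)) := by
    intro q hq r hr hqr
    by_contra hne
    rcases hdisj hq hr hne with h | h <;> linarith [(hI q hq).2.1, (hI r hr).2.1]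
  refine ⟨P, hP, ?_⟩
  calc ∑ q ∈ I, ‖Z q.2 - Z q.1‖ ^ p
      = ∑ x ∈ I.image Prod.fst, ‖Z (nextPt P b x) - Z x‖ ^ p := by
        rw [Finset.sum_image hinj]
        exact Finset.sum_congr rfl fun q hq => by rw [hnext q hq]
    _ ≤ varSum Z p b P := by
        refine Finset.sum_le_sum_of_subset_of_nonneg ?_
          fun _ _ _ => Real.rpow_nonneg (norm_nonneg _) p
        intro x hx
        obtain ⟨q, hq, rfl⟩ := Finset.mem_image.1 hx
        exact Finset.mem_erase.2 ⟨by linarith [(hI q hq).2.1, (hI q hq).2.2], hfst q hq⟩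

end Variation

section Jumps

variable {E : Type*} [NormedAddCommGroup E] {Z : ℝ → E} {p a b : ℝ}

lemma tendsto_minus_nhdsLT {t : ℝ} (ht : a < t) {L : E} (hL : Tendsto Z (𝓝[<] t) (𝓝 L)) :
    Tendsto Z (𝓝[<] t) (𝓝 (minus Z a t)) := by
  rwa [minus, if_neg (not_le.2 ht), leftLim_eq_of_tendsto hL]

lemma exists_mem_Ioo_lt_norm_sub_of_lt_norm_jump {x c r : ℝ} (hxc : x < c) (hac : a < c)
    (hL : ∃ L, Tendsto Z (𝓝[<] c) (𝓝 L)) (hr : r < ‖jump Z a c‖) :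
    ∃ s ∈ Ioo x c, r < ‖Z c - Z s‖ := by
  obtain ⟨L, hL⟩ := hL
  have hlim : Tendsto (fun s => ‖Z c - Z s‖) (𝓝[<] c) (𝓝 ‖jump Z a c‖) :=
    ((tendsto_minus_nhdsLT hac hL).const_sub (Z c)).norm
  exact (Filter.Eventually.and (Ioo_mem_nhdsLT hxc) (hlim.eventually_const_lt hr)).exists

lemma exists_disjoint_intervals_of_le_norm_jump
    (hZ : ∀ t ∈ Ioc a b, ∃ L, Tendsto Z (𝓝[<] t) (𝓝 L)) {x y η : ℝ} (hax : a ≤ x)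
    (hyb : y ≤ b) (hη : 0 < η) (hjump : ∀ c ∈ Ioo x y, η ≤ ‖jump Z a c‖) (n : ℕ) {c : ℝ}
    (hc : c ∈ Ioo x y) :
    ∃ I : Finset (ℝ × ℝ), I.card = n ∧ (∀ q ∈ I, x < q.1 ∧ q.1 < q.2 ∧ q.2 ≤ c) ∧
      (I : Set (ℝ × ℝ)).Pairwise (fun q r => q.2 ≤ r.1 ∨ r.2 ≤ q.1) ∧
      ∀ q ∈ I, η / 2 < ‖Z q.2 - Z q.1‖ := by
  induction n generalizing c with
  | zero => exact ⟨∅, by simp⟩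
  | succ n ih =>
    obtain ⟨s, hs, hZs⟩ := exists_mem_Ioo_lt_norm_sub_of_lt_norm_jump (a := a) (r := η / 2) hc.1
      (hax.trans_lt hc.1) (hZ c ⟨hax.trans_lt hc.1, hc.2.le.trans hyb⟩)
      (by linarith [hjump c hc])
    obtain ⟨I, hcard, hI, hdisj, hbig⟩ := ih ⟨hs.1, hs.2.trans hc.2⟩
    have hsI : (s, c) ∉ I := fun h => by linarith [(hI _ h).2.2, hs.2]
    refine ⟨insert (s, c) I, by rw [Finset.card_insert_of_notMem hsI, hcard], ?_, ?_, ?_⟩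
    · simp only [Finset.mem_insert, forall_eq_or_imp]
      exact ⟨⟨hs.1, hs.2, le_rfl⟩,
        fun q hq => ⟨(hI q hq).1, (hI q hq).2.1, (hI q hq).2.2.trans hs.2.le⟩⟩
    · rw [Finset.coe_insert, Set.pairwise_insert]
      exact ⟨hdisj, fun q hq _ => ⟨Or.inr (hI q hq).2.2, Or.inl (hI q hq).2.2⟩⟩
    · simp only [Finset.mem_insert, forall_eq_or_imp]
      exact ⟨hZs, hbig⟩

lemma exists_mem_Ioo_norm_jump_lt (hp : 0 ≤ p) (hZv : HasFiniteVar Z p a b)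
    (hZ : ∀ t ∈ Ioc a b, ∃ L, Tendsto Z (𝓝[<] t) (𝓝 L)) {x y η : ℝ} (hax : a ≤ x)
    (hxy : x < y) (hyb : y ≤ b) (hη : 0 < η) : ∃ c ∈ Ioo x y, ‖jump Z a c‖ < η := by
  by_contra! hjump
  obtain ⟨M, hM⟩ := hZv
  have hη' : 0 < (η / 2) ^ p := Real.rpow_pos_of_pos (by linarith) p
  obtain ⟨n, hn⟩ := exists_nat_gt (M / (η / 2) ^ p)
  obtain ⟨I, hcard, hI, hdisj, hbig⟩ := exists_disjoint_intervals_of_le_norm_jump hZ hax hyb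
    hη hjump n (c := (x + y) / 2) ⟨by linarith, by linarith⟩
  obtain ⟨P, hP, hsum⟩ := exists_isPartition_sum_le_varSum (Z := Z) (p := p)
    (hax.trans (hxy.le.trans hyb)) I (fun q hq => ⟨by linarith [(hI q hq).1], (hI q hq).2.1,
      by linarith [(hI q hq).2.2]⟩) hdisj
  have hlow : n * (η / 2) ^ p ≤ ∑ q ∈ I, ‖Z q.2 - Z q.1‖ ^ p := by
    rw [← hcard, ← nsmul_eq_mul]
    exact Finset.card_nsmul_le_sum _ _ _
      fun q hq => Real.rpow_le_rpow (by linarith) (hbig q hq).le hp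
  rw [div_lt_iff₀ hη'] at hn
  linarith [hM P hP]

end Jumps

section Refinement

variable {a b x : ℝ} {P₀ : Finset ℝ} {g : ℝ → ℝ}

def insertAfter (P₀ : Finset ℝ) (b : ℝ) (g : ℝ → ℝ) : Finset ℝ :=
  P₀ ∪ (P₀.erase b).image g

variable (hP₀ : IsPartition a b P₀) (hg : ∀ x ∈ P₀.erase b, x < g x ∧ g x < nextPt P₀ b x)
include hP₀ hg

lemma strictMonoOn_of_lt_nextPt : StrictMonoOn g (P₀.erase b) := by
  intro x hx y hy hxy
  have := (hP₀.nextPt_spec hx).2.2 y (Finset.mem_of_mem_erase hy) hxy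
  linarith [(hg x hx).2, (hg y hy).1]

lemma isPartition_insertAfter : IsPartition a b (insertAfter P₀ b g) := by
  refine ⟨Finset.mem_union_left _ hP₀.1, Finset.mem_union_left _ hP₀.2.1, fun z hz => ?_⟩
  rcases Finset.mem_union.1 hz with hz | hz
  · exact hP₀.2.2 z hz
  · obtain ⟨x, hx, rfl⟩ := Finset.mem_image.1 hz
    have hxa := (hP₀.2.2 x (Finset.mem_of_mem_erase hx)).1
    have hnb := (hP₀.2.2 _ (hP₀.nextPt_spec hx).1).2
    exact ⟨by linarith [(hg x hx).1], by linarith [(hg x hx).2]⟩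

lemma nextPt_insertAfter (hx : x ∈ P₀.erase b) : nextPt (insertAfter P₀ b g) b x = g x := by
  refine nextPt_eq (Finset.mem_union_right _ (Finset.mem_image_of_mem g hx)) (hg x hx).1
    fun z hz hxz => ?_
  rcases Finset.mem_union.1 hz with hz | hz
  · exact (hg x hx).2.le.trans ((hP₀.nextPt_spec hx).2.2 z hz hxz)
  · obtain ⟨y, hy, rfl⟩ := Finset.mem_image.1 hz
    rcases lt_trichotomy y x with hyx | rfl | hxy
    · have := (hP₀.nextPt_spec hy).2.2 x (Finset.mem_of_mem_erase hx) hyx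
      linarith [(hg y hy).2]
    · exact le_rfl
    · exact (strictMonoOn_of_lt_nextPt hP₀ hg hx hy hxy).le

lemma nextPt_insertAfter_apply (hx : x ∈ P₀.erase b) :
    nextPt (insertAfter P₀ b g) b (g x) = nextPt P₀ b x := by
  have hspec := hP₀.nextPt_spec hx
  refine nextPt_eq (Finset.mem_union_left _ hspec.1) (hg x hx).2 fun z hz hgz => ?_
  rcases Finset.mem_union.1 hz with hz | hz
  · exact hspec.2.2 z hz ((hg x hx).1.trans hgz)
  · obtain ⟨y, hy, rfl⟩ := Finset.mem_image.1 hz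
    have hxy : x < y := ((strictMonoOn_of_lt_nextPt hP₀ hg).lt_iff_lt hx hy).1 hgz
    linarith [hspec.2.2 y (Finset.mem_of_mem_erase hy) hxy, (hg y hy).1]

lemma sum_insertAfter {M : Type*} [AddCommMonoid M] (F : ℝ → ℝ → M) :
    ∑ z ∈ (insertAfter P₀ b g).erase b, F z (nextPt (insertAfter P₀ b g) b z) =
      ∑ x ∈ P₀.erase b, (F x (g x) + F (g x) (nextPt P₀ b x)) := by
  have hgP₀ : ∀ x ∈ P₀.erase b, g x ∉ P₀ := fun x hx hmem =>
    ((hP₀.nextPt_spec hx).2.2 _ hmem (hg x hx).1).not_gt (hg x hx).2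
  have hb : b ∉ (P₀.erase b).image g := fun hmem => by
    obtain ⟨x, hx, hxb⟩ := Finset.mem_image.1 hmem
    exact hgP₀ x hx (hxb ▸ hP₀.2.1)
  have hdisj : Disjoint (P₀.erase b) ((P₀.erase b).image g) :=
    Finset.disjoint_right.2 fun z hz hzP₀ => by
      obtain ⟨x, hx, rfl⟩ := Finset.mem_image.1 hz
      exact hgP₀ x hx (Finset.mem_of_mem_erase hzP₀)
  rw [insertAfter, Finset.erase_union_distrib, Finset.erase_eq_of_notMem hb,
    Finset.sum_union hdisj, Finset.sum_image (strictMonoOn_of_lt_nextPt hP₀ hg).injOn,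
    ← Finset.sum_add_distrib, ← insertAfter]
  exact Finset.sum_congr rfl fun x hx => by
    rw [nextPt_insertAfter hP₀ hg hx, nextPt_insertAfter_apply hP₀ hg hx]

end Refinement

lemma RRSTendsto.eq_of_exists_refinement_norm_sub_lt {E : Type*} [NormedAddCommGroup E]
    {a b : ℝ} {S₁ S₂ : Finset ℝ → E} {L₁ L₂ : E} (h₁ : RRSTendsto a b S₁ L₁)
    (h₂ : RRSTendsto a b S₂ L₂)
    (h : ∀ P₀, IsPartition a b P₀ → ∀ ε > 0, ∃ P, IsPartition a b P ∧ P₀ ⊆ P ∧ ‖S₁ P - S₂ P‖ < ε) :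
    L₁ = L₂ := by
  refine eq_of_forall_dist_le fun ε hε => ?_
  obtain ⟨P₁, hP₁, hS₁⟩ := h₁ (ε / 3) (by positivity)
  obtain ⟨P₂, hP₂, hS₂⟩ := h₂ (ε / 3) (by positivity)
  obtain ⟨P, hP, hsub, hS⟩ := h _ (hP₁.union hP₂) (ε / 3) (by positivity)
  have e₁ := hS₁ P hP (Finset.union_subset_left hsub)
  have e₂ := hS₂ P hP (Finset.union_subset_right hsub)
  calc dist L₁ L₂ ≤ dist L₁ (S₁ P) + dist (S₁ P) (S₂ P) + dist (S₂ P) L₂ := dist_triangle4 _ _ _ _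
    _ ≤ ε := by rw [dist_comm L₁, dist_eq_norm, dist_eq_norm, dist_eq_norm]; linarith

section RiemannSum

variable {d : ℕ}

lemma norm_outer_sub_le (A B C : EuclideanSpace ℝ (Fin d)) :
    ‖(fun i j => A i * (B j - C j) : Fin d → Fin d → ℝ)‖ ≤ ‖A‖ * ‖B - C‖ :=
  pi_norm_le_iff_of_nonneg (by positivity) |>.2 fun i =>
    pi_norm_le_iff_of_nonneg (by positivity) |>.2 fun j => by
      rw [norm_mul, ← PiLp.sub_apply]
      exact mul_le_mul (PiLp.norm_apply_le A i) (PiLp.norm_apply_le (B - C) j) (norm_nonneg _)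
        (norm_nonneg _)

lemma riemannSum_sub_riemannSum (Y Y' X : ℝ → EuclideanSpace ℝ (Fin d)) (b : ℝ)
    (P : Finset ℝ) :
    riemannSum Y X b P - riemannSum Y' X b P = riemannSum (fun t => Y t - Y' t) X b P := by
  rw [riemannSum, riemannSum, riemannSum, ← Finset.sum_sub_distrib]
  refine Finset.sum_congr rfl fun x _ => ?_
  funext i j
  simp only [Pi.sub_apply, PiLp.sub_apply]
  ring

end RiemannSum

lemma exists_mem_Ioo_norm_mul_norm_lt {E F : Type*} [NormedAddCommGroup E]
    [NormedAddCommGroup F] {J : ℝ → E} {X : ℝ → F} {x y ε : ℝ} (hxy : x < y) (hε : 0 < ε)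
    (hX : Tendsto X (𝓝[>] x) (𝓝 (X x)))
    (hJ : ∀ z ∈ Ioc x y, ∀ η > 0, ∃ c ∈ Ioo x z, ‖J c‖ < η) :
    ∃ c ∈ Ioo x y, ‖J x‖ * ‖X c - X x‖ < ε ∧ ‖J c‖ * ‖X y - X c‖ < ε := by
  set C := ‖X y - X x‖ + 1
  have hnear : ∀ᶠ c in 𝓝[>] x, ‖J x‖ * ‖X c - X x‖ < ε ∧ ‖X y - X c‖ < C := by
    refine Filter.Eventually.and ?_ ?_
    · refine Tendsto.eventually_lt_const (v := ‖J x‖ * ‖X x - X x‖) (by simpa using hε) ?_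
      exact ((hX.sub_const (X x)).norm).const_mul _
    · exact ((hX.const_sub (X y)).norm).eventually_lt_const (by simp [C])
  obtain ⟨u, hxu, hu⟩ := mem_nhdsGT_iff_exists_Ioo_subset.1 hnear
  obtain ⟨c, hc, hJc⟩ := hJ (min u y) ⟨lt_min hxu hxy, min_le_right _ _⟩ (ε / C) (by positivity)
  obtain ⟨hXc, hC⟩ := hu ⟨hc.1, hc.2.trans_le (min_le_left _ _)⟩
  refine ⟨c, ⟨hc.1, hc.2.trans_le (min_le_right _ _)⟩, hXc, ?_⟩
  calc ‖J c‖ * ‖X y - X c‖ ≤ ‖J c‖ * C := by gcongr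
    _ < ε / C * C := by gcongr
    _ = ε := div_mul_cancel₀ ε (by positivity)

lemma exists_refinement_norm_riemannSum_lt {d : ℕ} {a b : ℝ}
    {J X : ℝ → EuclideanSpace ℝ (Fin d)} (hX : ∀ t ∈ Ico a b, Tendsto X (𝓝[≥] t) (𝓝 (X t)))
    (hJ : ∀ x y, a ≤ x → x < y → y ≤ b → ∀ η > 0, ∃ c ∈ Ioo x y, ‖J c‖ < η)
    {P₀ : Finset ℝ} (hP₀ : IsPartition a b P₀) {ε : ℝ} (hε : 0 < ε) :
    ∃ P, IsPartition a b P ∧ P₀ ⊆ P ∧ ‖riemannSum J X b P‖ < ε := by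
  set m := ((P₀.erase b).card : ℝ)
  set ε' := ε / (2 * (m + 1))
  have hg : ∀ x ∈ P₀.erase b, ∃ c ∈ Ioo x (nextPt P₀ b x),
      ‖J x‖ * ‖X c - X x‖ < ε' ∧ ‖J c‖ * ‖X (nextPt P₀ b x) - X c‖ < ε' := by
    intro x hx
    obtain ⟨hnP₀, hxn, -⟩ := hP₀.nextPt_spec hx
    have hxa := (hP₀.2.2 x (Finset.mem_of_mem_erase hx)).1
    have hnb := (hP₀.2.2 _ hnP₀).2
    refine exists_mem_Ioo_norm_mul_norm_lt hxn (by positivity)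
      ((hX x ⟨hxa, hxn.trans_le hnb⟩).mono_left (nhdsWithin_mono _ Ioi_subset_Ici_self))
      fun z hz η hη => hJ x z hxa hz.1 (hz.2.trans hnb) η hη
  choose! g hgI hgsmall using hg
  refine ⟨insertAfter P₀ b g, isPartition_insertAfter hP₀ hgI, Finset.subset_union_left, ?_⟩
  have hsum : riemannSum J X b (insertAfter P₀ b g) = ∑ x ∈ P₀.erase b,
      ((fun i j => J x i * (X (g x) j - X x j)) +
        fun i j => J (g x) i * (X (nextPt P₀ b x) j - X (g x) j)) :=
    sum_insertAfter hP₀ hgI fun u v i j => J u i * (X v j - X u j)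
  calc ‖riemannSum J X b (insertAfter P₀ b g)‖ ≤ ∑ _x ∈ P₀.erase b, 2 * ε' := by
        rw [hsum]
        refine (norm_sum_le _ _).trans (Finset.sum_le_sum fun x hx => ?_)
        refine (norm_add_le _ _).trans ?_
        linarith [norm_outer_sub_le (J x) (X (g x)) (X x), (hgsmall x hx).1,
          norm_outer_sub_le (J (g x)) (X (nextPt P₀ b x)) (X (g x)), (hgsmall x hx).2]
    _ = m * (2 * ε') := by rw [Finset.sum_const, nsmul_eq_mul]
    _ < ε := by
        have hm : 0 ≤ m := Nat.cast_nonneg _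
        rw [show m * (2 * ε') = ε * (m / (m + 1)) by simp only [ε']; field_simp]
        exact mul_lt_of_lt_one_right hε ((div_lt_one (by positivity)).2 (by linarith))

theorem rrs_limits_left_and_leftlimit_agree_general
    {d : ℕ} (T p : ℝ) (hp1 : 1 ≤ p)
    (X Y : ℝ → EuclideanSpace ℝ (Fin d))
    (hXc : Cadlag X 0 T) (hYc : Cadlag Y 0 T)
    (hYv : HasFiniteVar Y p 0 T)
    (L₁ L₂ : Fin d → Fin d → ℝ)
    (h₁ : RRSTendsto 0 T (fun P => riemannSum Y X T P) L₁)
    (h₂ : RRSTendsto 0 T (fun P => riemannSum (fun t => minus Y 0 t) X T P) L₂) :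
    L₁ = L₂ := by
  refine h₁.eq_of_exists_refinement_norm_sub_lt h₂ fun P₀ hP₀ ε hε => ?_
  obtain ⟨P, hP, hsub, hsmall⟩ := exists_refinement_norm_riemannSum_lt hXc.1
    (fun x y hx hxy hy η hη => exists_mem_Ioo_norm_jump_lt (by linarith) hYv hYc.2 hx hxy hy hη)
    hP₀ hε
  exact ⟨P, hP, hsub, by rwa [riemannSum_sub_riemannSum]⟩

/-- For càdlàg paths `X, Y : [0,T] → ℝ^d` of finite `p`-variation,
`p ∈ [1,2)`, the refinement-Riemann–Stieltjes limits of the left-point Riemann sums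
`∑ Y_s ⊗ (X_t - X_s)` and `∑ Y_{s-} ⊗ (X_t - X_s)` agree whenever both exist. -/
theorem rrs_limits_left_and_leftlimit_agree
    {d : ℕ} (T p : ℝ) (hT : 0 < T) (hp1 : 1 ≤ p) (hp2 : p < 2)
    (X Y : ℝ → EuclideanSpace ℝ (Fin d))
    (hXc : Cadlag X 0 T) (hYc : Cadlag Y 0 T)
    (hXv : HasFiniteVar X p 0 T) (hYv : HasFiniteVar Y p 0 T)
    (L₁ L₂ : Fin d → Fin d → ℝ)
    (h₁ : RRSTendsto 0 T (fun P => riemannSum Y X T P) L₁)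
    (h₂ : RRSTendsto 0 T (fun P => riemannSum (fun t => minus Y 0 t) X T P) L₂) :
    L₁ = L₂ :=
  rrs_limits_left_and_leftlimit_agree_general T p hp1 X Y hXc hYc hYv L₁ L₂ h₁ h₂
end
end

section
/- Let X, Y be càdlàg paths of finite p-variation with p ∈ [1,2), and let ε > 0. Then the sum ∑_{[s,t]∈P} (ΔY_s) 1_{|ΔY_s| ≤ ε} (X_t − X_s) over a partition P is bounded in absolute value by ε^{(2−p)/2} · ‖Y‖_{p-var}^{p/2} · ‖X‖_{2-var}, where ΔY_s = Y_s − Y_{s-}. -/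
open scoped BigOperators
open MeasureTheory

noncomputable section

/-!
Each term of the sum is at most `‖ΔY_s 1_{‖ΔY_s‖ ≤ ε}‖ · ‖X_t − X_s‖`, so Cauchy–Schwarz bounds
the sum by the square root of `∑ ‖ΔY_s‖² 1_{‖ΔY_s‖ ≤ ε} ≤ ε^(2−p) ∑ ‖ΔY_s‖^p` times that of
`∑ ‖X_t − X_s‖²`. The second factor is at most `‖X‖_{2-var}`, which is finite since `p ≤ 2`.
The jumps at the points of a partition are controlled by the `p`-variation of `Y`: inserting a
point `u` just to the left of each partition point `x` gives a finer partition containing the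
increments `Y x − Y u`, and these tend to `ΔY_x` as `u ↑ x`.
-/

open Filter Topology Finset

theorem Finset.sum_rpow_le_rpow_sum {ι : Type*} (s : Finset ι) {f : ι → ℝ}
    (hf : ∀ i ∈ s, 0 ≤ f i) {q : ℝ} (hq : 1 ≤ q) : ∑ i ∈ s, f i ^ q ≤ (∑ i ∈ s, f i) ^ q := by
  classical
  induction s using Finset.induction_on with
  | empty => simp [Real.zero_rpow (by linarith : q ≠ 0)]
  | insert i s hi ih =>
    rw [sum_insert hi, sum_insert hi]
    have hfi : 0 ≤ f i := hf i (mem_insert_self i s)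
    have hfs : ∀ j ∈ s, 0 ≤ f j := fun j hj => hf j (mem_insert_of_mem hj)
    calc f i ^ q + ∑ j ∈ s, f j ^ q ≤ f i ^ q + (∑ j ∈ s, f j) ^ q := by gcongr; exact ih hfs
      _ ≤ (f i + ∑ j ∈ s, f j) ^ q := Real.add_rpow_le_rpow_add hfi (sum_nonneg hfs) hq

theorem norm_outer_le {ι κ : Type*} [Fintype ι] [Fintype κ] (u : EuclideanSpace ℝ ι)
    (v : EuclideanSpace ℝ κ) : ‖(fun i j => u i * v j : ι → κ → ℝ)‖ ≤ ‖u‖ * ‖v‖ := by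
  have h0 : 0 ≤ ‖u‖ * ‖v‖ := by positivity
  refine (pi_norm_le_iff_of_nonneg h0).2 fun i => (pi_norm_le_iff_of_nonneg h0).2 fun j => ?_
  rw [norm_mul]
  exact mul_le_mul (PiLp.norm_apply_le u i) (PiLp.norm_apply_le v j) (norm_nonneg _)
    (norm_nonneg _)

theorem sq_le_rpow_mul_rpow_of_le {t ε p : ℝ} (ht : 0 ≤ t) (htε : t ≤ ε) (hp0 : 0 ≤ p)
    (hp2 : p ≤ 2) : t ^ 2 ≤ ε ^ (2 - p) * t ^ p := by
  calc t ^ 2 = t ^ (2 - p) * t ^ p := by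
        rw [← Real.rpow_add_of_nonneg ht (by linarith) hp0, sub_add_cancel, Real.rpow_two]
    _ ≤ ε ^ (2 - p) * t ^ p := by gcongr

theorem norm_truncate_sq_le {E : Type*} [NormedAddCommGroup E] (v : E) {ε p : ℝ} (hε : 0 ≤ ε)
    (hp0 : 0 ≤ p) (hp2 : p ≤ 2) :
    ‖if ‖v‖ ≤ ε then v else 0‖ ^ 2 ≤ ε ^ (2 - p) * ‖v‖ ^ p := by
  split_ifs with hv
  · exact sq_le_rpow_mul_rpow_of_le (norm_nonneg v) hv hp0 hp2
  · rw [norm_zero, zero_pow two_ne_zero]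
    positivity

theorem nextPt_eq_of_forall_le {P : Finset ℝ} {b u x : ℝ} (hx : x ∈ P) (hux : u < x)
    (hmin : ∀ y ∈ P, u < y → x ≤ y) : nextPt P b u = x := by
  have : (P.filter (fun y => u < y)).min = x :=
    le_antisymm (min_le (mem_filter.2 ⟨hx, hux⟩)) <| Finset.le_min fun y hy =>
      WithBot.coe_le_coe.2 (hmin y (mem_filter.1 hy).1 (mem_filter.1 hy).2)
  rw [nextPt, this]
  rfl

section Paths

variable {E : Type*} [NormedAddCommGroup E]

theorem varSum_nonneg (X : ℝ → E) (p b : ℝ) (P : Finset ℝ) : 0 ≤ varSum X p b P :=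
  sum_nonneg fun _ _ => Real.rpow_nonneg (norm_nonneg _) p

theorem varSum_le_varSum_rpow (X : ℝ → E) {p q : ℝ} (hp : 0 < p) (hpq : p ≤ q) (b : ℝ)
    (P : Finset ℝ) : varSum X q b P ≤ varSum X p b P ^ (q / p) := by
  have hterm : ∀ x, ‖X (nextPt P b x) - X x‖ ^ q = (‖X (nextPt P b x) - X x‖ ^ p) ^ (q / p) :=
    fun x => by rw [← Real.rpow_mul (norm_nonneg _), mul_div_cancel₀ q hp.ne']
  simp only [varSum, hterm]
  exact sum_rpow_le_rpow_sum _ (fun _ _ => Real.rpow_nonneg (norm_nonneg _) p)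
    ((one_le_div hp).2 hpq)

theorem HasFiniteVar.mono_exponent {X : ℝ → E} {p q a b : ℝ} (hX : HasFiniteVar X p a b)
    (hp : 0 < p) (hpq : p ≤ q) : HasFiniteVar X q a b := by
  obtain ⟨M, hM⟩ := hX
  exact ⟨M ^ (q / p), fun P hP => (varSum_le_varSum_rpow X hp hpq b P).trans <|
    Real.rpow_le_rpow (varSum_nonneg X p b P) (hM P hP) (div_pos (hp.trans_le hpq) hp).le⟩

theorem HasFiniteVar.varSum_le_varNorm_rpow {X : ℝ → E} {p a b : ℝ}
    (hX : HasFiniteVar X p a b) (hp : 0 < p) {P : Finset ℝ} (hP : IsPartition a b P) :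
    varSum X p b P ≤ varNorm X p a b ^ p := by
  obtain ⟨M, hM⟩ := hX
  have hS : 0 ≤ sSup {v | ∃ Q : Finset ℝ, IsPartition a b Q ∧ v = varSum X p b Q} :=
    Real.sSup_nonneg (by rintro v ⟨Q, -, rfl⟩; exact varSum_nonneg X p b Q)
  rw [varNorm, one_div, Real.rpow_inv_rpow hS hp.ne']
  exact le_csSup ⟨M, by rintro v ⟨Q, hQ, rfl⟩; exact hM Q hQ⟩ ⟨P, hP, rfl⟩

theorem varNorm_nonneg (X : ℝ → E) (p a b : ℝ) : 0 ≤ varNorm X p a b :=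
  Real.rpow_nonneg (Real.sSup_nonneg (by rintro v ⟨Q, -, rfl⟩; exact varSum_nonneg X p b Q)) _

theorem jump_self (Y : ℝ → E) (a : ℝ) : jump Y a a = 0 := by
  simp [jump, minus]

theorem Cadlag.tendsto_minus {Y : ℝ → E} {a b x : ℝ} (hY : Cadlag Y a b)
    (hx : x ∈ Set.Ioc a b) : Tendsto Y (𝓝[<] x) (𝓝 (minus Y a x)) := by
  obtain ⟨L, hL⟩ := hY.2 x hx
  rwa [minus, if_neg (not_le.2 hx.1), leftLim_eq_of_tendsto hL]

/- In the next three lemmas `s` places a new point `s x` in each gap `(y, x)` between a point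
`x ∈ F ⊆ P` and its predecessor `y` in `P`. -/

theorem nextPt_union_image {P F : Finset ℝ} {s : ℝ → ℝ} (hF : F ⊆ P)
    (hs : ∀ x ∈ F, s x < x ∧ ∀ y ∈ P, y < x → y < s x) (b : ℝ) {x : ℝ} (hx : x ∈ F) :
    nextPt (P ∪ F.image s) b (s x) = x := by
  refine nextPt_eq_of_forall_le (mem_union_left _ (hF hx)) (hs x hx).1 fun y hy hxy => ?_
  by_contra! hyx
  rcases mem_union.1 hy with hyP | hyF
  · exact (hxy.trans ((hs x hx).2 y hyP hyx)).false
  · obtain ⟨x', hx', rfl⟩ := mem_image.1 hyF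
    rcases lt_trichotomy x' x with h | rfl | h
    · exact (hxy.trans (hs x' hx').1).asymm ((hs x hx).2 x' (hF hx') h)
    · exact hxy.false
    · exact hyx.not_gt ((hs x' hx').2 x (hF hx) h)

theorem isPartition_union_image {a b : ℝ} {P F : Finset ℝ} {s : ℝ → ℝ} (hP : IsPartition a b P)
    (hF : F ⊆ P) (hFa : ∀ x ∈ F, a < x) (hs : ∀ x ∈ F, s x < x ∧ ∀ y ∈ P, y < x → y < s x) :
    IsPartition a b (P ∪ F.image s) := by
  refine ⟨mem_union_left _ hP.1, mem_union_left _ hP.2.1, fun y hy => ?_⟩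
  rcases mem_union.1 hy with hyP | hyF
  · exact hP.2.2 y hyP
  · obtain ⟨x, hx, rfl⟩ := mem_image.1 hyF
    exact ⟨((hs x hx).2 a hP.1 (hFa x hx)).le, ((hs x hx).1.trans_le (hP.2.2 x (hF hx)).2).le⟩

theorem sum_rpow_le_varSum_union_image (Y : ℝ → E) (p : ℝ) {a b : ℝ} {P F : Finset ℝ}
    {s : ℝ → ℝ} (hP : IsPartition a b P) (hF : F ⊆ P)
    (hs : ∀ x ∈ F, s x < x ∧ ∀ y ∈ P, y < x → y < s x) :
    ∑ x ∈ F, ‖Y x - Y (s x)‖ ^ p ≤ varSum Y p b (P ∪ F.image s) := by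
  have hinj : Set.InjOn s F := fun x hx x' hx' hxx' => by
    rw [← nextPt_union_image hF hs b hx, hxx', nextPt_union_image hF hs b hx']
  have hsub : F.image s ⊆ (P ∪ F.image s).erase b := fun y hy => by
    obtain ⟨x, hx, rfl⟩ := mem_image.1 hy
    exact mem_erase.2 ⟨((hs x hx).1.trans_le (hP.2.2 x (hF hx)).2).ne, mem_union_right _ hy⟩
  calc ∑ x ∈ F, ‖Y x - Y (s x)‖ ^ p
      = ∑ y ∈ F.image s, ‖Y (nextPt (P ∪ F.image s) b y) - Y y‖ ^ p := by
        rw [sum_image hinj]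
        exact sum_congr rfl fun x hx => by rw [nextPt_union_image hF hs b hx]
    _ ≤ varSum Y p b (P ∪ F.image s) :=
        sum_le_sum_of_subset_of_nonneg hsub fun _ _ _ => Real.rpow_nonneg (norm_nonneg _) p

theorem eventually_nhdsLT_forall_lt (P : Finset ℝ) (x : ℝ) :
    ∀ᶠ u in 𝓝[<] x, u < x ∧ ∀ y ∈ P, y < x → y < u := by
  refine (eventually_nhdsWithin_of_forall fun u hu => hu).and <|
    (eventually_all_finset P).2 fun y _ => ?_
  by_cases hyx : y < x
  · exact (eventually_gt_nhds hyx).filter_mono nhdsWithin_le_nhds |>.mono fun _ h _ => h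
  · exact Eventually.of_forall fun _ h => absurd h hyx

theorem sum_jump_rpow_le_varNorm_rpow {Y : ℝ → E} {p a b : ℝ} (hYc : Cadlag Y a b)
    (hYv : HasFiniteVar Y p a b) (hp : 0 < p) {P : Finset ℝ} (hP : IsPartition a b P) :
    ∑ x ∈ P.erase b, ‖jump Y a x‖ ^ p ≤ varNorm Y p a b ^ p := by
  set F := (P.erase b).filter (a < ·)
  have hFP : F ⊆ P := fun x hx => mem_of_mem_erase (mem_filter.1 hx).1
  have hFa : ∀ x ∈ F, a < x := fun x hx => (mem_filter.1 hx).2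
  have hFb : ∀ x ∈ F, x ≤ b := fun x hx => (hP.2.2 x (hFP hx)).2
  have hsum : ∑ x ∈ F, ‖jump Y a x‖ ^ p = ∑ x ∈ P.erase b, ‖jump Y a x‖ ^ p := by
    refine sum_filter_of_ne fun x hx hne => lt_of_le_of_ne (hP.2.2 x (mem_of_mem_erase hx)).1 ?_
    rintro rfl
    simp [jump_self, Real.zero_rpow hp.ne'] at hne
  rw [← hsum]
  have hlim : Tendsto (fun s : ℝ → ℝ => ∑ x ∈ F, ‖Y x - Y (s x)‖ ^ p)
      (Filter.pi fun x => 𝓝[<] x) (𝓝 (∑ x ∈ F, ‖jump Y a x‖ ^ p)) :=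
    tendsto_finsetSum F fun x hx =>
      (((hYc.tendsto_minus ⟨hFa x hx, hFb x hx⟩).comp (tendsto_eval_pi _ x)).const_sub
        (Y x)).norm.rpow_const (Or.inr hp.le)
  have hev : ∀ᶠ s in Filter.pi fun x => 𝓝[<] x, ∀ x ∈ F, s x < x ∧ ∀ y ∈ P, y < x → y < s x :=
    (eventually_all_finset F).2 fun x _ =>
      (tendsto_eval_pi (fun x => 𝓝[<] x) x).eventually (eventually_nhdsLT_forall_lt P x)
  exact le_of_tendsto hlim <| hev.mono fun s hs =>
    (sum_rpow_le_varSum_union_image Y p hP hFP hs).trans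
      (hYv.varSum_le_varNorm_rpow hp (isPartition_union_image hP hFP hFa hs))

theorem sum_norm_small_jump_sq_le {Y : ℝ → E} {p a b ε : ℝ} (hYc : Cadlag Y a b)
    (hYv : HasFiniteVar Y p a b) (hp0 : 0 < p) (hp2 : p ≤ 2) (hε : 0 ≤ ε) {P : Finset ℝ}
    (hP : IsPartition a b P) :
    ∑ x ∈ P.erase b, ‖if ‖jump Y a x‖ ≤ ε then jump Y a x else 0‖ ^ 2 ≤
      ε ^ (2 - p) * varNorm Y p a b ^ p :=
  calc _ ≤ ∑ x ∈ P.erase b, ε ^ (2 - p) * ‖jump Y a x‖ ^ p :=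
        sum_le_sum fun x _ => norm_truncate_sq_le _ hε hp0.le hp2
    _ ≤ ε ^ (2 - p) * varNorm Y p a b ^ p := by
        rw [← mul_sum]
        gcongr
        exact sum_jump_rpow_le_varNorm_rpow hYc hYv hp0 hP

end Paths

theorem small_jump_sum_bound_general
    {d : ℕ} (T p ε : ℝ) (hp1 : 1 ≤ p) (hp2 : p < 2) (hε : 0 < ε)
    (X Y : ℝ → EuclideanSpace ℝ (Fin d))
    (hYc : Cadlag Y 0 T)
    (hXv : HasFiniteVar X p 0 T) (hYv : HasFiniteVar Y p 0 T)
    (P : Finset ℝ) (hP : IsPartition 0 T P) :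
    ‖∑ x ∈ P.erase T, (fun i j =>
        (if ‖jump Y 0 x‖ ≤ ε then jump Y 0 x i else 0) *
          (X (nextPt P T x) j - X x j) : Fin d → Fin d → ℝ)‖
      ≤ ε ^ ((2 - p) / 2) * varNorm Y p 0 T ^ (p / 2) * varNorm X 2 0 T := by
  have hp0 : 0 < p := by linarith
  set A : ℝ → EuclideanSpace ℝ (Fin d) := fun x => if ‖jump Y 0 x‖ ≤ ε then jump Y 0 x else 0
  set B : ℝ → EuclideanSpace ℝ (Fin d) := fun x => X (nextPt P T x) - X x
  have hA : ∑ x ∈ P.erase T, ‖A x‖ ^ 2 ≤ ε ^ (2 - p) * varNorm Y p 0 T ^ p :=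
    sum_norm_small_jump_sq_le hYc hYv hp0 hp2.le hε.le hP
  have hB : ∑ x ∈ P.erase T, ‖B x‖ ^ 2 ≤ varNorm X 2 0 T ^ 2 := by
    simpa only [varSum, Real.rpow_two] using
      (hXv.mono_exponent hp0 hp2.le).varSum_le_varNorm_rpow two_pos hP
  calc _ ≤ ∑ x ∈ P.erase T, ‖A x‖ * ‖B x‖ := by
        refine (norm_sum_le _ _).trans (sum_le_sum fun x _ => ?_)
        have hterm : (fun i j => (if ‖jump Y 0 x‖ ≤ ε then jump Y 0 x i else 0) *
            (X (nextPt P T x) j - X x j) : Fin d → Fin d → ℝ) = fun i j => A x i * B x j := by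
          ext i j
          by_cases h : ‖jump Y 0 x‖ ≤ ε <;> simp [A, B, h]
        rw [hterm]
        exact norm_outer_le (A x) (B x)
    _ ≤ √(∑ x ∈ P.erase T, ‖A x‖ ^ 2) * √(∑ x ∈ P.erase T, ‖B x‖ ^ 2) :=
        Real.sum_mul_le_sqrt_mul_sqrt _ _ _
    _ ≤ √(ε ^ (2 - p) * varNorm Y p 0 T ^ p) * √(varNorm X 2 0 T ^ 2) := by gcongr
    _ = ε ^ ((2 - p) / 2) * varNorm Y p 0 T ^ (p / 2) * varNorm X 2 0 T := by
        rw [Real.sqrt_sq (varNorm_nonneg X 2 0 T), Real.sqrt_mul (by positivity),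
          Real.sqrt_eq_rpow, Real.sqrt_eq_rpow, ← Real.rpow_mul hε.le,
          ← Real.rpow_mul (varNorm_nonneg Y p 0 T)]
        ring_nf

/-- For càdlàg `X, Y` of finite `p`-variation, `p ∈ [1,2)`, and `ε > 0`,
the sum `∑_{[s,t]∈P} (ΔY_s) 1_{‖ΔY_s‖ ≤ ε} ⊗ (X_t − X_s)` over any partition `P` of `[0,T]`
is bounded in norm by `ε^((2−p)/2) ‖Y‖_{p-var}^{p/2} ‖X‖_{2-var}`. -/
theorem small_jump_sum_bound
    {d : ℕ} (T p ε : ℝ) (hT : 0 < T) (hp1 : 1 ≤ p) (hp2 : p < 2) (hε : 0 < ε)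
    (X Y : ℝ → EuclideanSpace ℝ (Fin d))
    (hXc : Cadlag X 0 T) (hYc : Cadlag Y 0 T)
    (hXv : HasFiniteVar X p 0 T) (hYv : HasFiniteVar Y p 0 T)
    (P : Finset ℝ) (hP : IsPartition 0 T P) :
    ‖∑ x ∈ P.erase T, (fun i j =>
        (if ‖jump Y 0 x‖ ≤ ε then jump Y 0 x i else 0) *
          (X (nextPt P T x) j - X x j) : Fin d → Fin d → ℝ)‖
      ≤ ε ^ ((2 - p) / 2) * varNorm Y p 0 T ^ (p / 2) * varNorm X 2 0 T :=
  small_jump_sum_bound_general T p ε hp1 hp2 hε X Y hYc hXv hYv P hP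
end
end

section
/- Let ω be a nonnegative superadditive function on subintervals of [s,t], and let P be a partition of [s,t] into r ≥ 2 intervals. Then there exist three consecutive partition points u₋ < u < u₊ in P such that ω[u₋, u₊] ≤ 2/(r−1) · ω[s,t]. -/
/-!
Summing `ω[u_k, u_{k+2}]` over all `k`, the terms with `k` even form a chain of adjacent
intervals, and so do those with `k` odd; by superadditivity each chain contributes at most
`ω[s,t]`. Hence the `r - 1` terms sum to at most `2 ω[s,t]`, and the smallest is at most the
average.
-/

noncomputable section

/-- `ω` is superadditive on subintervals of `[a,b]`. -/
def SuperadditiveOn (ω : ℝ → ℝ → ℝ) (a b : ℝ) : Prop :=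
  ∀ s u t : ℝ, a ≤ s → s ≤ u → u ≤ t → t ≤ b → ω s u + ω u t ≤ ω s t

open Finset

namespace SuperadditiveOn

variable {ω : ℝ → ℝ → ℝ} {a b : ℝ}

theorem apply_le_apply_endpoints (hω : SuperadditiveOn ω a b)
    (hnn : ∀ x y : ℝ, a ≤ x → x ≤ y → y ≤ b → 0 ≤ ω x y)
    {x y : ℝ} (hax : a ≤ x) (hxy : x ≤ y) (hyb : y ≤ b) : ω x y ≤ ω a b := by
  have hleft := hω a x y le_rfl hax hxy hyb
  have hright := hω a y b le_rfl (hax.trans hxy) hyb le_rfl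
  have := hnn a x le_rfl hax (hxy.trans hyb)
  have := hnn y b (hax.trans hxy) hyb le_rfl
  linarith

/-- The even- and odd-indexed terms telescope separately; the invariant carries one partial
chain ending at `v n` and the other ending at `v (n + 1)`. -/
theorem sum_apply_skip_le (hω : SuperadditiveOn ω a b)
    (hnn : ∀ x y : ℝ, a ≤ x → x ≤ y → y ≤ b → 0 ≤ ω x y)
    {v : ℕ → ℝ} (hv : Monotone v) (hva : ∀ n, a ≤ v n) (hvb : ∀ n, v n ≤ b) (n : ℕ) :
    ∑ k ∈ range n, ω (v k) (v (k + 2)) ≤ ω (v 0) (v n) + ω (v 0) (v (n + 1)) := by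
  induction n with
  | zero =>
    have := hnn (v 0) (v 0) (hva 0) le_rfl (hvb 0)
    have := hnn (v 0) (v 1) (hva 0) (hv (Nat.zero_le 1)) (hvb 1)
    simp only [sum_range_zero]
    linarith
  | succ n ih =>
    have hsplit := hω (v 0) (v n) (v (n + 2)) (hva 0) (hv n.zero_le) (hv (by omega)) (hvb _)
    rw [sum_range_succ]
    linarith

theorem sum_apply_skip_le_two_mul (hω : SuperadditiveOn ω a b)
    (hnn : ∀ x y : ℝ, a ≤ x → x ≤ y → y ≤ b → 0 ≤ ω x y)
    {v : ℕ → ℝ} (hv : Monotone v) (hva : ∀ n, a ≤ v n) (hvb : ∀ n, v n ≤ b) (n : ℕ) :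
    ∑ k ∈ range n, ω (v k) (v (k + 2)) ≤ 2 * ω a b := by
  have := hω.apply_le_apply_endpoints hnn (hva 0) (hv n.zero_le) (hvb n)
  have := hω.apply_le_apply_endpoints hnn (hva 0) (hv (n + 1).zero_le) (hvb (n + 1))
  linarith [hω.sum_apply_skip_le hnn hv hva hvb n]

end SuperadditiveOn

/-- If `ω` is nonnegative and superadditive on subintervals of `[s,t]` and
`u : Fin (r+1) → ℝ` is a partition of `[s,t]` into `r ≥ 2` intervals, then there are three
consecutive partition points `u_k < u_{k+1} < u_{k+2}` with
`ω (u_k) (u_{k+2}) ≤ 2/(r−1) · ω s t`. -/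
theorem superadditive_small_consecutive_pair
    (s t : ℝ) (ω : ℝ → ℝ → ℝ)
    (hnn : ∀ a b : ℝ, s ≤ a → a ≤ b → b ≤ t → 0 ≤ ω a b)
    (hω : SuperadditiveOn ω s t)
    (r : ℕ) (hr : 2 ≤ r) (u : Fin (r + 1) → ℝ)
    (hmono : StrictMono u) (h0 : u 0 = s) (hlast : u (Fin.last r) = t) :
    ∃ k : ℕ, ∃ hk : k + 2 ≤ r,
      ω (u ⟨k, by omega⟩) (u ⟨k + 2, by omega⟩) ≤ 2 / (r - 1 : ℝ) * ω s t := by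
  let v : ℕ → ℝ := fun i => u ⟨min i r, by omega⟩
  have hv : Monotone v := fun i j hij => hmono.monotone (Fin.mk_le_mk.2 (min_le_min_right r hij))
  have hvs : ∀ n, s ≤ v n := fun n => h0 ▸ hmono.monotone (Fin.zero_le _)
  have hvt : ∀ n, v n ≤ t := fun n => hlast ▸ hmono.monotone (Fin.le_last _)
  have hr1 : (r : ℝ) - 1 ≠ 0 := by
    have : (2 : ℝ) ≤ r := by exact_mod_cast hr
    linarith
  have hsum : ∑ k ∈ range (r - 1), ω (v k) (v (k + 2)) ≤
      ∑ _k ∈ range (r - 1), 2 / (r - 1 : ℝ) * ω s t := by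
    rw [sum_const, card_range, nsmul_eq_mul, Nat.cast_sub (by omega), Nat.cast_one, ← mul_assoc,
      mul_div_cancel₀ 2 hr1]
    exact hω.sum_apply_skip_le_two_mul hnn hv hvs hvt (r - 1)
  obtain ⟨k, hk, hle⟩ := exists_le_of_sum_le (nonempty_range_iff.2 (by omega)) hsum
  have hk : k + 2 ≤ r := by rw [mem_range] at hk; omega
  refine ⟨k, hk, ?_⟩
  simpa only [v, min_eq_left (by omega : k ≤ r), min_eq_left hk] using hle
end
end

section
/- If X and Y are càdlàg paths of finite p- and q-variation respectively with 1/p + 1/q > 1, then for any θ > 0 with 1/p + 1/q ≥ 1/θ, the two-parameter function Z_{s,t} := ∫_{(s,t]} (Y_{r-} − Y_s) dX_r (Young integral) has finite θ-variation: sup over partitions of ∑ |Z_{s,t}|^θ < ∞. -/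
open scoped BigOperators
open MeasureTheory

noncomputable section

noncomputable def varSum2 {F : Type*} [NormedAddCommGroup F] (Ξ : ℝ → ℝ → F) (q b : ℝ)
    (P : Finset ℝ) : ℝ :=
  ∑ x ∈ P.erase b, ‖Ξ x (nextPt P b x)‖ ^ q

def HasFiniteVar2 {F : Type*} [NormedAddCommGroup F] (Ξ : ℝ → ℝ → F) (q a b : ℝ) : Prop :=
  ∃ M : ℝ, ∀ P : Finset ℝ, IsPartition a b P → varSum2 Ξ q b P ≤ M

/-!
Let `ω(u, v)` be the `p`-variation of `X` plus the `q`-variation of the left-limit path `Y₋` over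
`[u, v]` (each raised to its exponent); it is superadditive, and `Y₋` inherits the variation bound
of `Y` because left limits are limits of values taken from the left. For the germ
`Ξ(u, v) = (Y_{u-} - Y_s) ⊗ (X_v - X_u)`, deleting a point `m` of a partition between `u` and `v`
changes the Riemann sum by `(Y_{m-} - Y_{u-}) ⊗ (X_v - X_m)`, of size at most `ω(u, v) ^ γ` with
`γ = 1/p + 1/q > 1`. Superadditivity always provides a point whose neighbours span at most
`2 ω(s, t) / (N - 1)`, so deleting points one by one bounds every Riemann sum, hence `Z_{s,t}`, by
`C (|ΔY_s| ^ q + ω(s, t)) ^ γ`. Since `γ θ ≥ 1`, the `θ`-th powers of these bounds over a partition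
sum to at most `C ^ θ` times the `γ θ`-th power of the sum of the jumps `|ΔY_{t_i}| ^ q` and of
`ω(t_i, t_{i+1})`, which the `q`-variation of `Y` and the superadditivity of `ω` keep bounded.
-/

namespace YoungVariation

open Finset Filter Topology

structure IsStrictChain (u v : ℝ) (n : ℕ) (c : ℕ → ℝ) : Prop where
  zero : c 0 = u
  last : c n = v
  lt_succ : ∀ i < n, c i < c (i + 1)

def chainSum {M : Type*} [AddCommMonoid M] (F : ℝ → ℝ → M) (n : ℕ) (c : ℕ → ℝ) : M :=
  ∑ i ∈ range n, F (c i) (c (i + 1))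

def chainAppend (c₁ : ℕ → ℝ) (n₁ : ℕ) (c₂ : ℕ → ℝ) (i : ℕ) : ℝ :=
  if i < n₁ then c₁ i else c₂ (i - n₁)

namespace IsStrictChain

variable {u m v : ℝ} {n : ℕ} {c : ℕ → ℝ}

lemma strictMonoOn (h : IsStrictChain u v n c) : StrictMonoOn c (Set.Iic n) :=
  strictMonoOn_Iic_of_lt_succ fun i hi => by simpa using h.lt_succ i hi

lemma lt_of_lt (h : IsStrictChain u v n c) {i j : ℕ} (hij : i < j) (hj : j ≤ n) : c i < c j :=
  h.strictMonoOn (Set.mem_Iic.2 (hij.le.trans hj)) (Set.mem_Iic.2 hj) hij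

lemma le_of_le (h : IsStrictChain u v n c) {i j : ℕ} (hij : i ≤ j) (hj : j ≤ n) : c i ≤ c j :=
  h.strictMonoOn.monotoneOn (Set.mem_Iic.2 (hij.trans hj)) (Set.mem_Iic.2 hj) hij

lemma mem_Icc (h : IsStrictChain u v n c) {i : ℕ} (hi : i ≤ n) : c i ∈ Set.Icc u v :=
  ⟨h.zero ▸ h.le_of_le i.zero_le hi, h.last ▸ h.le_of_le hi le_rfl⟩

lemma le (h : IsStrictChain u v n c) : u ≤ v := (h.mem_Icc le_rfl).1.trans_eq h.last

lemma single (huv : u < v) : IsStrictChain u v 1 (fun i => if i = 0 then u else v) :=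
  ⟨rfl, rfl, fun i hi => by
    obtain rfl : i = 0 := by omega
    simpa using huv⟩

lemma exists_of_le (huv : u ≤ v) : ∃ n c, IsStrictChain u v n c := by
  rcases huv.eq_or_lt with rfl | huv
  · exact ⟨0, fun _ => u, rfl, rfl, fun i hi => absurd hi i.not_lt_zero⟩
  · exact ⟨1, _, single huv⟩

lemma append {n₁ n₂ : ℕ} {c₁ c₂ : ℕ → ℝ} (h₁ : IsStrictChain u m n₁ c₁)
    (h₂ : IsStrictChain m v n₂ c₂) : IsStrictChain u v (n₁ + n₂) (chainAppend c₁ n₁ c₂) := by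
  refine ⟨?_, ?_, fun i hi => ?_⟩
  · rcases n₁.eq_zero_or_pos with rfl | hn₁
    · simp [chainAppend, h₂.zero, ← h₁.zero, h₁.last]
    · simp [chainAppend, hn₁, h₁.zero]
  · simp [chainAppend, h₂.last]
  · rcases lt_trichotomy (i + 1) n₁ with hi₁ | rfl | hi₁
    · simpa [chainAppend, hi₁, (Nat.lt_succ_self i).trans hi₁] using h₁.lt_succ i (by omega)
    · simpa [chainAppend, ← h₂.zero, h₁.last] using h₁.lt_succ i (by omega)
    · rw [chainAppend, chainAppend, if_neg (by omega), if_neg (by omega),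
        Nat.sub_add_comm (by omega)]
      exact h₂.lt_succ (i - n₁) (by omega)

end IsStrictChain

lemma chainSum_append {M : Type*} [AddCommMonoid M] (F : ℝ → ℝ → M) {n₁ n₂ : ℕ}
    {c₁ c₂ : ℕ → ℝ} (h : c₁ n₁ = c₂ 0) :
    chainSum F (n₁ + n₂) (chainAppend c₁ n₁ c₂) = chainSum F n₁ c₁ + chainSum F n₂ c₂ := by
  unfold chainSum
  rw [sum_range_add]
  congr 1
  · refine sum_congr rfl fun i hi => ?_
    have hi := mem_range.1 hi
    rcases (Nat.succ_le_of_lt hi).eq_or_lt with hi' | hi'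
    · simp [chainAppend, ← hi', ← h]
    · simp [chainAppend, hi, hi']
  · refine sum_congr rfl fun i _ => ?_
    rw [chainAppend, chainAppend, if_neg (by omega), if_neg (by omega), Nat.add_sub_cancel_left,
      add_assoc, Nat.add_sub_cancel_left]

lemma nextPt_eq {P : Finset ℝ} {b x m : ℝ} (hm : m ∈ P) (hxm : x < m)
    (hmin : ∀ y ∈ P, x < y → m ≤ y) : nextPt P b x = m := by
  have : (P.filter (x < ·)).min = m :=
    le_antisymm (min_le (mem_filter.2 ⟨hm, hxm⟩)) (Finset.le_min fun y hy =>
      WithTop.coe_le_coe.2 (hmin y (mem_filter.1 hy).1 (mem_filter.1 hy).2))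
  rw [nextPt, this]
  rfl

namespace IsStrictChain

variable {u v : ℝ} {n : ℕ} {c : ℕ → ℝ}

lemma isPartition (h : IsStrictChain u v n c) : IsPartition u v ((range (n + 1)).image c) := by
  refine ⟨mem_image.2 ⟨0, by simp, h.zero⟩, mem_image.2 ⟨n, by simp, h.last⟩, fun x hx => ?_⟩
  obtain ⟨i, hi, rfl⟩ := mem_image.1 hx
  exact h.mem_Icc (Nat.lt_succ_iff.1 (mem_range.1 hi))

lemma nextPt_image (h : IsStrictChain u v n c) {i : ℕ} (hi : i < n) :
    nextPt ((range (n + 1)).image c) v (c i) = c (i + 1) := by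
  refine nextPt_eq (mem_image.2 ⟨i + 1, by simp [hi], rfl⟩) (h.lt_succ i hi) fun y hy hlt => ?_
  obtain ⟨j, hj, rfl⟩ := mem_image.1 hy
  have hj : j ≤ n := Nat.lt_succ_iff.1 (mem_range.1 hj)
  have hij : i < j := (h.strictMonoOn.lt_iff_lt (Set.mem_Iic.2 hi.le) (Set.mem_Iic.2 hj)).1 hlt
  exact h.le_of_le hij hj

lemma sum_erase_nextPt {M : Type*} [AddCommMonoid M] (h : IsStrictChain u v n c)
    (F : ℝ → ℝ → M) :
    ∑ x ∈ ((range (n + 1)).image c).erase v, F x (nextPt ((range (n + 1)).image c) v x) =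
      chainSum F n c := by
  have herase : ((range (n + 1)).image c).erase v = (range n).image c := by
    rw [Finset.range_add_one, image_insert, h.last, erase_insert]
    simp only [mem_image, mem_range, not_exists, not_and]
    exact fun i hi hci => (h.lt_of_lt hi le_rfl).ne (hci.trans h.last.symm)
  rw [herase, sum_image fun i hi j hj hij => h.strictMonoOn.injOn
    (Set.mem_Iic.2 (mem_range.1 hi).le) (Set.mem_Iic.2 (mem_range.1 hj).le) hij]
  exact sum_congr rfl fun i hi => by rw [h.nextPt_image (mem_range.1 hi)]

end IsStrictChain

lemma IsPartition.exists_chain {a b : ℝ} {P : Finset ℝ} (hP : IsPartition a b P) :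
    ∃ n c, IsStrictChain a b n c ∧ P = (range (n + 1)).image c := by
  obtain ⟨ha, hb, hmem⟩ := hP
  obtain ⟨n, hn⟩ : ∃ n, P.card = n + 1 := Nat.exists_eq_add_one.2 (card_pos.2 ⟨a, ha⟩)
  set e := P.orderEmbOfFin hn
  have hrange : ∀ x, x ∈ P ↔ ∃ j, e j = x := fun x => by
    rw [← mem_coe, ← range_orderEmbOfFin P hn]; rfl
  have hextreme : ∀ j, a ≤ e j ∧ e j ≤ b := fun j => hmem _ ((hrange _).2 ⟨j, rfl⟩)
  refine ⟨n, fun i => e (Fin.clamp i n), ⟨?_, ?_, fun i hi => ?_⟩, ?_⟩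
  · obtain ⟨j, hj⟩ := (hrange a).1 ha
    exact le_antisymm (hj ▸ e.monotone (Fin.zero_le j)) (hextreme _).1
  · obtain ⟨j, hj⟩ := (hrange b).1 hb
    have hjn : j ≤ Fin.clamp n n := by
      simp only [Fin.clamp, min_self, Fin.le_def]
      omega
    exact le_antisymm (hextreme _).2 (hj ▸ e.monotone hjn)
  · exact e.strictMono (Fin.mk_lt_mk.2 (by simp only [min_def]; split_ifs <;> omega))
  · ext x
    rw [hrange, mem_image]
    constructor
    · rintro ⟨j, rfl⟩
      exact ⟨j, mem_range.2 j.2, by simp [Fin.clamp, Nat.lt_succ_iff.1 j.2]⟩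
    · rintro ⟨i, -, rfl⟩
      exact ⟨_, rfl⟩

structure IsControl (ω : ℝ → ℝ → ℝ) (a b : ℝ) : Prop where
  nonneg : ∀ ⦃u v⦄, a ≤ u → u ≤ v → v ≤ b → 0 ≤ ω u v
  superadditive : ∀ ⦃u m v⦄, a ≤ u → u ≤ m → m ≤ v → v ≤ b → ω u m + ω m v ≤ ω u v

namespace IsControl

variable {ω ω' : ℝ → ℝ → ℝ} {a b : ℝ}

lemma add (h : IsControl ω a b) (h' : IsControl ω' a b) : IsControl (ω + ω') a b where
  nonneg _ _ hu huv hv := add_nonneg (h.nonneg hu huv hv) (h'.nonneg hu huv hv)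
  superadditive _ _ _ hu hum hmv hv := by
    simp only [Pi.add_apply]
    linarith [h.superadditive hu hum hmv hv, h'.superadditive hu hum hmv hv]

lemma subinterval (h : IsControl ω a b) {a' b' : ℝ} (ha : a ≤ a') (hb : b' ≤ b) :
    IsControl ω a' b' where
  nonneg _ _ hu huv hv := h.nonneg (ha.trans hu) huv (hv.trans hb)
  superadditive _ _ _ hu hum hmv hv := h.superadditive (ha.trans hu) hum hmv (hv.trans hb)

lemma mono (h : IsControl ω a b) {u u' v' v : ℝ} (hu : a ≤ u) (huu' : u ≤ u') (hu'v' : u' ≤ v')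
    (hv'v : v' ≤ v) (hv : v ≤ b) : ω u' v' ≤ ω u v := by
  have := h.superadditive hu huu' (hu'v'.trans hv'v) hv
  have := h.superadditive (hu.trans huu') hu'v' hv'v hv
  have := h.nonneg hu huu' ((hu'v'.trans hv'v).trans hv)
  have := h.nonneg ((hu.trans huu').trans hu'v') hv'v hv
  linarith

lemma chainSum_le (h : IsControl ω a b) {m : ℕ} {e : ℕ → ℝ} (he : MonotoneOn e (Set.Iic m))
    (h0 : a ≤ e 0) (hm : e m ≤ b) : chainSum ω m e ≤ ω (e 0) (e m) := by
  induction m with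
  | zero => simpa [chainSum] using h.nonneg h0 le_rfl hm
  | succ m ih =>
    have hmon {i j : ℕ} (hij : i ≤ j) (hj : j ≤ m + 1) : e i ≤ e j :=
      he (Set.mem_Iic.2 (hij.trans hj)) (Set.mem_Iic.2 hj) hij
    rw [chainSum, sum_range_succ]
    calc _ ≤ ω (e 0) (e m) + ω (e m) (e (m + 1)) :=
          add_le_add_left (ih (he.mono (Set.Iic_subset_Iic.2 m.le_succ))
            ((hmon m.le_succ le_rfl).trans hm)) _
      _ ≤ _ := h.superadditive h0 (hmon m.zero_le m.le_succ) (hmon m.le_succ le_rfl) hm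

end IsControl

section Variation

variable {E : Type*} [NormedAddCommGroup E] {W : ℝ → E} {r a b M u v : ℝ} {n : ℕ} {c : ℕ → ℝ}

def incrPow (W : ℝ → E) (r x y : ℝ) : ℝ := ‖W y - W x‖ ^ r

lemma incrPow_nonneg (W : ℝ → E) (r x y : ℝ) : 0 ≤ incrPow W r x y :=
  Real.rpow_nonneg (norm_nonneg _) _

lemma chainSum_incrPow_nonneg : 0 ≤ chainSum (incrPow W r) n c :=
  sum_nonneg fun _ _ => incrPow_nonneg W r _ _

lemma IsStrictChain.exists_extend (h : IsStrictChain u v n c) (hau : a ≤ u) (hvb : v ≤ b) :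
    ∃ N c', IsStrictChain a b N c' ∧ chainSum (incrPow W r) n c ≤ chainSum (incrPow W r) N c' := by
  obtain ⟨n₀, c₀, h₀⟩ := IsStrictChain.exists_of_le hau
  obtain ⟨n₂, c₂, h₂⟩ := IsStrictChain.exists_of_le hvb
  refine ⟨_, _, (h₀.append h).append h₂, ?_⟩
  rw [chainSum_append _ ((h₀.append h).last.trans h₂.zero.symm),
    chainSum_append _ (h₀.last.trans h.zero.symm)]
  linarith [chainSum_incrPow_nonneg (W := W) (r := r) (n := n₀) (c := c₀),
    chainSum_incrPow_nonneg (W := W) (r := r) (n := n₂) (c := c₂)]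

def VarBoundedOn (W : ℝ → E) (r a b M : ℝ) : Prop :=
  ∀ ⦃u v : ℝ⦄ ⦃n : ℕ⦄ ⦃c : ℕ → ℝ⦄, a ≤ u → v ≤ b → IsStrictChain u v n c →
    chainSum (incrPow W r) n c ≤ M

lemma _root_.HasFiniteVar.exists_varBoundedOn (h : HasFiniteVar W r a b) :
    ∃ M, VarBoundedOn W r a b M := by
  obtain ⟨M, hM⟩ := h
  refine ⟨M, fun u v n c hu hv hc => ?_⟩
  obtain ⟨N, c', hc', hle⟩ := hc.exists_extend (W := W) (r := r) hu hv
  exact hle.trans ((hc'.sum_erase_nextPt (incrPow W r)).symm.trans_le (hM _ hc'.isPartition))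

def variationSums (W : ℝ → E) (r u v : ℝ) : Set ℝ :=
  {S | ∃ n c, IsStrictChain u v n c ∧ chainSum (incrPow W r) n c = S}

/-- `varCtrl W r u v` is `‖W‖_{r-var;[u,v]} ^ r`, as a supremum over chains. -/
def varCtrl (W : ℝ → E) (r u v : ℝ) : ℝ := sSup (variationSums W r u v)

lemma variationSums_nonempty (huv : u ≤ v) : (variationSums W r u v).Nonempty := by
  obtain ⟨n, c, hc⟩ := IsStrictChain.exists_of_le huv
  exact ⟨_, n, c, hc, rfl⟩

namespace VarBoundedOn

variable (hW : VarBoundedOn W r a b M)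
include hW

lemma bddAbove_variationSums (hu : a ≤ u) (hv : v ≤ b) : BddAbove (variationSums W r u v) :=
  ⟨M, by rintro _ ⟨n, c, hc, rfl⟩; exact hW hu hv hc⟩

lemma chainSum_le_varCtrl (hu : a ≤ u) (hv : v ≤ b) (hc : IsStrictChain u v n c) :
    chainSum (incrPow W r) n c ≤ varCtrl W r u v :=
  le_csSup (hW.bddAbove_variationSums hu hv) ⟨n, c, hc, rfl⟩

lemma varCtrl_le (hu : a ≤ u) (huv : u ≤ v) (hv : v ≤ b) : varCtrl W r u v ≤ M :=
  csSup_le (variationSums_nonempty huv) (by rintro _ ⟨n, c, hc, rfl⟩; exact hW hu hv hc)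

lemma incrPow_le_varCtrl (hu : a ≤ u) (huv : u < v) (hv : v ≤ b) :
    incrPow W r u v ≤ varCtrl W r u v := by
  simpa [chainSum] using hW.chainSum_le_varCtrl hu hv (IsStrictChain.single huv)

lemma isControl : IsControl (varCtrl W r) a b where
  nonneg u v hu huv hv := by
    obtain ⟨n, c, hc⟩ := IsStrictChain.exists_of_le huv
    exact chainSum_incrPow_nonneg.trans (hW.chainSum_le_varCtrl hu hv hc)
  superadditive u m v hu hum hmv hv := by
    rw [varCtrl, varCtrl, ← csSup_add (variationSums_nonempty hum)
      (hW.bddAbove_variationSums hu (hmv.trans hv)) (variationSums_nonempty hmv)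
      (hW.bddAbove_variationSums (hu.trans hum) hv)]
    refine csSup_le_csSup (hW.bddAbove_variationSums hu hv)
      ((variationSums_nonempty hum).add (variationSums_nonempty hmv)) ?_
    rintro _ ⟨_, ⟨n₁, c₁, h₁, rfl⟩, _, ⟨n₂, c₂, h₂, rfl⟩, rfl⟩
    exact ⟨_, _, h₁.append h₂, chainSum_append _ (h₁.last.trans h₂.zero.symm)⟩

end VarBoundedOn

end Variation

def eraseSucc (c : ℕ → ℝ) (k i : ℕ) : ℝ :=
  if i ≤ k then c i else c (i + 1)

lemma IsStrictChain.eraseSucc {u v : ℝ} {n : ℕ} {c : ℕ → ℝ} (h : IsStrictChain u v (n + 2) c)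
    {k : ℕ} (hk : k ≤ n) : IsStrictChain u v (n + 1) (eraseSucc c k) := by
  refine ⟨by simp [YoungVariation.eraseSucc, h.zero], ?_, fun i hi => ?_⟩
  · simpa [YoungVariation.eraseSucc, show ¬ n + 1 ≤ k by omega] using h.last
  · rcases lt_trichotomy i k with hik | rfl | hik
    · simpa [YoungVariation.eraseSucc, hik.le, Nat.succ_le_of_lt hik] using h.lt_succ i (by omega)
    · simpa [YoungVariation.eraseSucc] using h.lt_of_lt (i := i) (j := i + 2) (by omega) (by omega)
    · simpa [YoungVariation.eraseSucc, hik.not_ge, show ¬ i + 1 ≤ k by omega]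
        using h.lt_succ (i + 1) (by omega)

lemma chainSum_eraseSucc {G : Type*} [AddCommGroup G] (F : ℝ → ℝ → G) (c : ℕ → ℝ) {n k : ℕ}
    (hk : k ≤ n) :
    chainSum F (n + 2) c = chainSum F (n + 1) (eraseSucc c k) -
      (F (c k) (c (k + 2)) - F (c k) (c (k + 1)) - F (c (k + 1)) (c (k + 2))) := by
  obtain ⟨m, rfl⟩ := Nat.exists_eq_add_of_le hk
  have hbefore : ∀ i ∈ range k, F (eraseSucc c k i) (eraseSucc c k (i + 1)) = F (c i) (c (i + 1)) :=
    fun i hi => by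
      have hi := mem_range.1 hi
      simp [YoungVariation.eraseSucc, hi.le, Nat.succ_le_of_lt hi]
  have hafter : ∀ i ∈ range m, F (eraseSucc c k (k + (i + 1))) (eraseSucc c k (k + (i + 1) + 1)) =
      F (c (k + (i + 1 + 1))) (c (k + (i + 1 + 1) + 1)) := fun i _ => by
    simp [YoungVariation.eraseSucc, add_assoc]
  unfold chainSum
  rw [show k + m + 2 = k + (m + 2) by ring, show k + m + 1 = k + (m + 1) by ring,
    sum_range_add _ k (m + 2), sum_range_add _ k (m + 1), sum_range_succ' _ (m + 1),
    sum_range_succ' _ m, sum_range_succ' _ m, sum_congr rfl hbefore, sum_congr rfl hafter]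
  simp only [add_assoc, Nat.reduceAdd, zero_add, add_zero, YoungVariation.eraseSucc, le_refl,
    if_true, add_le_iff_nonpos_right, nonpos_iff_eq_zero, one_ne_zero, if_false]
  abel

lemma IsControl.exists_removable {ω : ℝ → ℝ → ℝ} {s t : ℝ} (hω : IsControl ω s t) {n : ℕ}
    {c : ℕ → ℝ} (hc : IsStrictChain s t (n + 2) c) :
    ∃ k ≤ n, ω (c k) (c (k + 2)) ≤ 2 * ω s t / (n + 1) := by
  set m := n / 2 + 1
  have hpairs : ∑ j ∈ range m, ω (c (2 * j)) (c (2 * j + 2)) ≤ ω s t := by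
    have hsum := hω.chainSum_le (m := m) (e := fun j => c (2 * j))
      (fun i _ j hj hij => hc.le_of_le (by omega) (by simp only [Set.mem_Iic] at hj; omega))
      (by simp [hc.zero]) (hc.mem_Icc (by omega)).2
    simp only [chainSum, mul_add, mul_one, mul_zero, hc.zero] at hsum
    exact hsum.trans
      (hω.mono le_rfl le_rfl (hc.mem_Icc (by omega)).1 (hc.mem_Icc (by omega)).2 le_rfl)
  have haverage : ω s t = ∑ _j ∈ range m, ω s t / m := by
    rw [sum_const, card_range, nsmul_eq_mul, mul_div_cancel₀ _ (by positivity : (m : ℝ) ≠ 0)]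
  obtain ⟨j, hj, hle⟩ :=
    exists_le_of_sum_le (nonempty_range_iff.2 (by omega : m ≠ 0)) (hpairs.trans_eq haverage)
  refine ⟨2 * j, by simp only [mem_range] at hj; omega, hle.trans ?_⟩
  have hω0 := hω.nonneg le_rfl hc.le le_rfl
  have hm : (n : ℝ) + 1 ≤ 2 * m := by
    have : n + 1 ≤ 2 * m := by omega
    exact_mod_cast this
  rw [div_le_div_iff₀ (by positivity) (by positivity)]
  nlinarith

lemma summable_one_div_add_one_rpow {γ : ℝ} (hγ : 1 < γ) :
    Summable fun k : ℕ => 1 / ((k : ℝ) + 1) ^ γ := by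
  simpa using (summable_nat_add_iff 1).2 (Real.summable_one_div_nat_rpow.2 hγ)

section Sewing

variable {G : Type*} [NormedAddCommGroup G] {Ξ : ℝ → ℝ → G} {ω : ℝ → ℝ → ℝ} {s t γ : ℝ}

/-- Young–Loève: remove, one at a time, a point whose two neighbours span the least control. -/
theorem norm_chainSum_sub_le_sum (hω : IsControl ω s t) (hγ : 0 ≤ γ)
    (hΞ : ∀ u m v, s ≤ u → u < m → m < v → v ≤ t → ‖Ξ u v - Ξ u m - Ξ m v‖ ≤ ω u v ^ γ) :
    ∀ (n : ℕ) (c : ℕ → ℝ), IsStrictChain s t (n + 1) c →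
      ‖chainSum Ξ (n + 1) c - Ξ s t‖ ≤ (2 * ω s t) ^ γ * ∑ k ∈ range n, 1 / ((k : ℝ) + 1) ^ γ := by
  intro n
  induction n with
  | zero => intro c hc; simp [chainSum, hc.zero, ← hc.last]
  | succ n ih =>
    intro c hc
    obtain ⟨k, hk, hωk⟩ := hω.exists_removable hc
    have hω0 := hω.nonneg le_rfl hc.le le_rfl
    have hδ : ‖Ξ (c k) (c (k + 2)) - Ξ (c k) (c (k + 1)) - Ξ (c (k + 1)) (c (k + 2))‖ ≤
        (2 * ω s t) ^ γ * (1 / ((n : ℝ) + 1) ^ γ) :=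
      calc _ ≤ ω (c k) (c (k + 2)) ^ γ :=
            hΞ _ _ _ (hc.mem_Icc (by omega)).1 (hc.lt_succ k (by omega))
              (hc.lt_succ (k + 1) (by omega)) (hc.mem_Icc (by omega)).2
        _ ≤ (2 * ω s t / (n + 1)) ^ γ :=
            Real.rpow_le_rpow (hω.nonneg (hc.mem_Icc (by omega)).1
              (hc.le_of_le (by omega) (by omega)) (hc.mem_Icc (by omega)).2) hωk hγ
        _ = _ := by
            rw [Real.div_rpow (by positivity) (by positivity), div_eq_mul_one_div]
    rw [chainSum_eraseSucc Ξ c hk, sum_range_succ, mul_add, sub_right_comm]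
    exact (norm_sub_le _ _).trans (add_le_add (ih _ (hc.eraseSucc hk)) hδ)

theorem norm_chainSum_sub_le (hω : IsControl ω s t) (hγ : 1 < γ)
    (hΞ : ∀ u m v, s ≤ u → u < m → m < v → v ≤ t → ‖Ξ u v - Ξ u m - Ξ m v‖ ≤ ω u v ^ γ)
    {n : ℕ} {c : ℕ → ℝ} (hc : IsStrictChain s t n c) (hn : 0 < n) :
    ‖chainSum Ξ n c - Ξ s t‖ ≤ (2 * ω s t) ^ γ * ∑' k : ℕ, 1 / ((k : ℝ) + 1) ^ γ := by
  obtain ⟨n, rfl⟩ := Nat.exists_eq_add_one.2 hn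
  have hω0 := hω.nonneg le_rfl hc.le le_rfl
  exact (norm_chainSum_sub_le_sum hω (zero_le_one.trans hγ.le) hΞ n c hc).trans
    (mul_le_mul_of_nonneg_left ((summable_one_div_add_one_rpow hγ).sum_le_tsum _
      fun _ _ => by positivity) (by positivity))

end Sewing

section LeftLimits

/-- The filter along which a càdlàg path on `[a, b]` tends to `minus Y a t`. -/
def leftApproach (a t : ℝ) : Filter ℝ := if t ≤ a then pure a else 𝓝[<] t

instance (a t : ℝ) : (leftApproach a t).NeBot := by
  unfold leftApproach
  split_ifs <;> infer_instance

lemma leftApproach_of_lt {a t : ℝ} (h : a < t) : leftApproach a t = 𝓝[<] t := if_neg h.not_ge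

lemma eventually_leftApproach_mem_Icc {a t : ℝ} (h : a ≤ t) :
    ∀ᶠ y in leftApproach a t, y ∈ Set.Icc a t := by
  rcases h.eq_or_lt with rfl | h
  · simp [leftApproach]
  · rw [leftApproach_of_lt h]
    filter_upwards [Ioo_mem_nhdsLT h] with y hy using Set.Ioo_subset_Icc_self hy

variable {E : Type*} [NormedAddCommGroup E] {Y : ℝ → E} {q a b M u v : ℝ} {n : ℕ} {c : ℕ → ℝ}

lemma _root_.Cadlag.tendsto_leftApproach (hY : Cadlag Y a b) {t : ℝ} (hat : a ≤ t) (htb : t ≤ b) :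
    Tendsto Y (leftApproach a t) (𝓝 (minus Y a t)) := by
  rcases hat.eq_or_lt with rfl | hat
  · simpa [leftApproach, minus] using tendsto_pure_nhds Y a
  · obtain ⟨L, hL⟩ := hY.2 t ⟨hat, htb⟩
    rwa [leftApproach_of_lt hat, minus, if_neg hat.not_ge, leftLim_eq_of_tendsto hL]

lemma IsStrictChain.eventually_interlace (hc : IsStrictChain u v n c) (hau : a ≤ u) :
    ∀ᶠ y in Filter.pi fun i => leftApproach a (c i),
      y 0 ∈ Set.Icc a (c 0) ∧ ∀ j ∈ range n, y (j + 1) ∈ Set.Ioo (c j) (c (j + 1)) := by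
  have hac : a ≤ c 0 := hau.trans_eq hc.zero.symm
  refine ((tendsto_eval_pi (fun i => leftApproach a (c i)) 0).eventually
    (eventually_leftApproach_mem_Icc hac)).and ((eventually_all_finset _).2 fun j hj => ?_)
  have hj := mem_range.1 hj
  refine (tendsto_eval_pi _ (j + 1)).eventually ?_
  rw [leftApproach_of_lt (hac.trans_lt (hc.lt_of_lt j.succ_pos (by omega)))]
  exact Ioo_mem_nhdsLT (hc.lt_succ j hj)

lemma _root_.Cadlag.tendsto_pi_leftApproach (hY : Cadlag Y a b) (hc : IsStrictChain u v n c)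
    (hau : a ≤ u) (hvb : v ≤ b) {i : ℕ} (hi : i ≤ n) :
    Tendsto (fun y : ℕ → ℝ => Y (y i)) (Filter.pi fun i => leftApproach a (c i))
      (𝓝 (minus Y a (c i))) :=
  (hY.tendsto_leftApproach (hau.trans (hc.mem_Icc hi).1) ((hc.mem_Icc hi).2.trans hvb)).comp
    (tendsto_eval_pi _ i)

namespace VarBoundedOn

variable (hW : VarBoundedOn Y q a b M) (hY : Cadlag Y a b) (hq : 0 < q)
include hW hY hq

lemma minus : VarBoundedOn (minus Y a) q a b M := by
  intro u v n c hu hv hc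
  refine le_of_tendsto (tendsto_finsetSum _ fun i hi =>
    (((hY.tendsto_pi_leftApproach hc hu hv (mem_range.1 hi)).sub
      (hY.tendsto_pi_leftApproach hc hu hv (mem_range.1 hi).le)).norm.rpow_const
      (Or.inr hq.le))) ?_
  filter_upwards [hc.eventually_interlace hu] with y ⟨hy0, hy⟩
  have hchain : IsStrictChain (y 0) (y n) n y := ⟨rfl, rfl, fun i hi => by
    rcases i with _ | i
    · exact hy0.2.trans_lt (hy 0 (mem_range.2 hi)).1
    · exact (hy i (mem_range.2 (by omega))).2.trans (hy (i + 1) (mem_range.2 hi)).1⟩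
  refine hW hy0.1 ?_ hchain
  rcases n with _ | n
  · exact hy0.2.trans ((hc.mem_Icc le_rfl).2.trans hv)
  · exact (hy n (mem_range.2 n.lt_succ_self)).2.le.trans ((hc.mem_Icc le_rfl).2.trans hv)

end VarBoundedOn

/-- The sequence `c 0, y 1, c 1, y 2, c 2, …`. -/
def interlace (c y : ℕ → ℝ) (k : ℕ) : ℝ := if Even k then c (k / 2) else y (k / 2 + 1)

lemma interlace_two_mul (c y : ℕ → ℝ) (j : ℕ) : interlace c y (2 * j) = c j := by
  simp [interlace]

lemma interlace_two_mul_add_one (c y : ℕ → ℝ) (j : ℕ) : interlace c y (2 * j + 1) = y (j + 1) := by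
  simp [interlace, show (2 * j + 1) / 2 = j by omega]

lemma chainSum_two_mul {M : Type*} [AddCommMonoid M] (F : ℝ → ℝ → M) (n : ℕ) (z : ℕ → ℝ) :
    chainSum F (2 * n) z =
      ∑ j ∈ range n, (F (z (2 * j)) (z (2 * j + 1)) + F (z (2 * j + 1)) (z (2 * j + 2))) := by
  induction n with
  | zero => simp [chainSum]
  | succ n ih =>
    rw [sum_range_succ, ← ih, show 2 * (n + 1) = 2 * n + 1 + 1 by ring, chainSum, chainSum,
      sum_range_succ, sum_range_succ, add_assoc]

lemma IsStrictChain.interlace {u v : ℝ} {n : ℕ} {c y : ℕ → ℝ} (hc : IsStrictChain u v n c)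
    (hy : ∀ j ∈ range n, y (j + 1) ∈ Set.Ioo (c j) (c (j + 1))) :
    IsStrictChain u v (2 * n) (interlace c y) := by
  refine ⟨by simpa using interlace_two_mul c y 0 ▸ hc.zero, interlace_two_mul c y n ▸ hc.last,
    fun k hk => ?_⟩
  obtain ⟨j, rfl | rfl⟩ := Nat.even_or_odd' k
  · rw [interlace_two_mul, interlace_two_mul_add_one]
    exact (hy j (mem_range.2 (by omega))).1
  · rw [interlace_two_mul_add_one, show 2 * j + 1 + 1 = 2 * (j + 1) by ring, interlace_two_mul]
    exact (hy j (mem_range.2 (by omega))).2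

lemma jump_self (Y : ℝ → E) (a : ℝ) : jump Y a a = 0 := by simp [jump, minus]

namespace VarBoundedOn

variable (hW : VarBoundedOn Y q a b M) (hY : Cadlag Y a b) (hq : 0 < q)
include hW hY hq

lemma chainSum_jump_le (hc : IsStrictChain u v n c) (hu : a ≤ u) (hv : v ≤ b) :
    chainSum (fun _ y => ‖jump Y a y‖ ^ q) n c ≤ M := by
  have hlim : Tendsto (fun y : ℕ → ℝ => ∑ j ∈ range n, ‖Y (c (j + 1)) - Y (y (j + 1))‖ ^ q)
      (Filter.pi fun i => leftApproach a (c i)) (𝓝 (chainSum (fun _ y => ‖jump Y a y‖ ^ q) n c)) :=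
    tendsto_finsetSum _ fun j hj => (tendsto_const_nhds.sub
      (hY.tendsto_pi_leftApproach hc hu hv (mem_range.1 hj))).norm.rpow_const (Or.inr hq.le)
  refine le_of_tendsto hlim ?_
  filter_upwards [hc.eventually_interlace hu] with y hy
  calc ∑ j ∈ range n, ‖Y (c (j + 1)) - Y (y (j + 1))‖ ^ q
      ≤ chainSum (incrPow Y q) (2 * n) (interlace c y) := by
        rw [chainSum_two_mul]
        refine sum_le_sum fun j _ => ?_
        rw [interlace_two_mul_add_one, show 2 * j + 2 = 2 * (j + 1) by ring,
          interlace_two_mul c y (j + 1)]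
        exact le_add_of_nonneg_left (incrPow_nonneg Y q _ _)
    _ ≤ M := hW hu hv (hc.interlace hy.2)

lemma chainSum_jump_left_le (hc : IsStrictChain a v n c) (hv : v ≤ b) :
    chainSum (fun x _ => ‖jump Y a x‖ ^ q) n c ≤ M := by
  refine le_trans ?_ (hW.chainSum_jump_le hY hq hc le_rfl hv)
  rcases n with _ | n
  · simp [chainSum]
  · rw [chainSum, chainSum, sum_range_succ', sum_range_succ, hc.zero, jump_self, norm_zero,
      Real.zero_rpow hq.ne', add_zero]
    exact le_add_of_nonneg_right (Real.rpow_nonneg (norm_nonneg _) _)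

end VarBoundedOn

end LeftLimits

lemma chainSum_jump_add_varCtrl_le {E F : Type*} [NormedAddCommGroup E]
    [NormedAddCommGroup F] {X : ℝ → E} {Y : ℝ → F} {p q a b MX MY : ℝ} {n : ℕ} {c : ℕ → ℝ}
    (hX : VarBoundedOn X p a b MX) (hY : VarBoundedOn Y q a b MY) (hYc : Cadlag Y a b)
    (hq : 0 < q) (hc : IsStrictChain a b n c) :
    chainSum (fun x y => ‖jump Y a x‖ ^ q + (varCtrl X p + varCtrl (minus Y a) q) x y) n c ≤
      MY + (MX + MY) := by
  have hYm := hY.minus hYc hq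
  rw [chainSum, sum_add_distrib]
  refine add_le_add (hY.chainSum_jump_left_le hYc hq hc le_rfl) ?_
  have := (hX.isControl.add hYm.isControl).chainSum_le hc.strictMonoOn.monotoneOn
    hc.zero.ge hc.last.le
  rw [hc.zero, hc.last] at this
  exact this.trans (add_le_add (hX.varCtrl_le le_rfl hc.le le_rfl)
    (hYm.varCtrl_le le_rfl hc.le le_rfl))

lemma _root_.RRSTendsto.norm_le {E : Type*} [NormedAddCommGroup E] {a b C : ℝ}
    {S : Finset ℝ → E} {L : E} (h : RRSTendsto a b S L)
    (hS : ∀ P, IsPartition a b P → ‖S P‖ ≤ C) : ‖L‖ ≤ C := by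
  refine le_of_forall_pos_le_add fun ε hε => ?_
  obtain ⟨P, hP, hconv⟩ := h ε hε
  linarith [norm_le_norm_add_norm_sub (S P) L, hS P hP, hconv P hP subset_rfl]

lemma VarBoundedOn.norm_sub_le_varCtrl_rpow {E : Type*} [NormedAddCommGroup E] {W : ℝ → E}
    {r a b M u v x y : ℝ} (hW : VarBoundedOn W r a b M) (hr : 0 < r) (hu : a ≤ u) (hux : u ≤ x)
    (hxy : x < y) (hyv : y ≤ v) (hv : v ≤ b) : ‖W y - W x‖ ≤ varCtrl W r u v ^ (1 / r) := by
  have hle : incrPow W r x y ≤ varCtrl W r u v :=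
    (hW.incrPow_le_varCtrl (hu.trans hux) hxy (hyv.trans hv)).trans
      (hW.isControl.mono hu hux hxy.le hyv hv)
  rw [one_div]
  exact (Real.le_rpow_inv_iff_of_pos (norm_nonneg _) ((incrPow_nonneg W r x y).trans hle) hr).2 hle

def outer {d : ℕ} (x y : EuclideanSpace ℝ (Fin d)) : Fin d → Fin d → ℝ := fun i j => x i * y j

lemma norm_outer_le {d : ℕ} (x y : EuclideanSpace ℝ (Fin d)) : ‖outer x y‖ ≤ ‖x‖ * ‖y‖ := by
  refine (pi_norm_le_iff_of_nonneg (by positivity)).2 fun i =>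
    (pi_norm_le_iff_of_nonneg (by positivity)).2 fun j => ?_
  rw [outer, norm_mul]
  exact mul_le_mul (PiLp.norm_apply_le x i) (PiLp.norm_apply_le y j) (norm_nonneg _) (norm_nonneg _)

def youngConst (γ : ℝ) : ℝ := 1 + 2 ^ γ * ∑' k : ℕ, 1 / ((k : ℝ) + 1) ^ γ

lemma youngConst_nonneg (γ : ℝ) : 0 ≤ youngConst γ :=
  add_nonneg zero_le_one (mul_nonneg (by positivity) (tsum_nonneg fun _ => by positivity))

section Young

variable {d : ℕ} {X Y : ℝ → EuclideanSpace ℝ (Fin d)} {p q a b MX MY : ℝ}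

lemma norm_sub_mul_norm_sub_le (hp : 0 < p) (hq : 0 < q) (hX : VarBoundedOn X p a b MX)
    (hY : VarBoundedOn Y q a b MY) {u m v : ℝ} (hu : a ≤ u) (hum : u < m) (hmv : m < v)
    (hv : v ≤ b) :
    ‖Y m - Y u‖ * ‖X v - X m‖ ≤ (varCtrl X p + varCtrl Y q) u v ^ (1 / p + 1 / q) := by
  have hX0 := hX.isControl.nonneg hu (hum.trans hmv).le hv
  have hY0 := hY.isControl.nonneg hu (hum.trans hmv).le hv
  have hω0 : 0 ≤ (varCtrl X p + varCtrl Y q) u v := add_nonneg hX0 hY0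
  rw [Real.rpow_add' hω0 (by positivity), mul_comm]
  refine mul_le_mul ?_ ?_ (norm_nonneg _) (Real.rpow_nonneg hω0 _)
  · exact (hX.norm_sub_le_varCtrl_rpow hp hu hum.le hmv le_rfl hv).trans
      (Real.rpow_le_rpow hX0 (le_add_of_nonneg_right hY0) (by positivity))
  · exact (hY.norm_sub_le_varCtrl_rpow hq hu le_rfl hum hmv.le hv).trans
      (Real.rpow_le_rpow hY0 (le_add_of_nonneg_left hX0) (by positivity))

lemma norm_outer_germ_sub_le (hp : 0 < p) (hq : 0 < q) (hX : VarBoundedOn X p a b MX)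
    (hY : VarBoundedOn Y q a b MY) (y₀ : EuclideanSpace ℝ (Fin d)) {u m v : ℝ} (hu : a ≤ u)
    (hum : u < m) (hmv : m < v) (hv : v ≤ b) :
    ‖outer (Y u - y₀) (X v - X u) - outer (Y u - y₀) (X m - X u) - outer (Y m - y₀) (X v - X m)‖ ≤
      (varCtrl X p + varCtrl Y q) u v ^ (1 / p + 1 / q) := by
  have hδ : outer (Y u - y₀) (X v - X u) - outer (Y u - y₀) (X m - X u) -
      outer (Y m - y₀) (X v - X m) = outer (Y u - Y m) (X v - X m) := by
    funext i j
    simp only [outer, Pi.sub_apply, PiLp.sub_apply]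
    ring
  rw [hδ]
  refine (norm_outer_le _ _).trans ?_
  rw [norm_sub_rev]
  exact norm_sub_mul_norm_sub_le hp hq hX hY hu hum hmv hv

/-- Young's estimate for the integral `∫_{(s,t]} (Y_{r-} - Y_s) ⊗ dX_r`. -/
theorem norm_young_le (hp : 0 < p) (hq : 0 < q) (hpq : 1 < 1 / p + 1 / q)
    (hX : VarBoundedOn X p a b MX) (hY : VarBoundedOn (minus Y a) q a b MY)
    {s t : ℝ} (hs : a ≤ s) (hst : s < t) (ht : t ≤ b) {L : Fin d → Fin d → ℝ}
    (hL : RRSTendsto s t (fun P => ∑ x ∈ P.erase t,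
      (fun i j => (minus Y a x i - Y s i) * (X (nextPt P t x) j - X x j) : Fin d → Fin d → ℝ)) L) :
    ‖L‖ ≤ youngConst (1 / p + 1 / q) *
      (‖jump Y a s‖ ^ q + (varCtrl X p + varCtrl (minus Y a) q) s t) ^ (1 / p + 1 / q) := by
  set γ := 1 / p + 1 / q
  set ω := varCtrl X p + varCtrl (minus Y a) q
  set V := ‖jump Y a s‖ ^ q + ω s t
  set Ξ : ℝ → ℝ → (Fin d → Fin d → ℝ) := fun x y => outer (minus Y a x - Y s) (X y - X x)
  have hω : IsControl ω s t := (hX.isControl.add hY.isControl).subinterval hs ht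
  have hX0 : 0 ≤ varCtrl X p s t := hX.isControl.nonneg hs hst.le ht
  have hω0 : 0 ≤ ω s t := hω.nonneg le_rfl hst.le le_rfl
  have hV0 : 0 ≤ V := by positivity
  have hωV : ω s t ≤ V := le_add_of_nonneg_left (by positivity)
  have hΞ : ∀ u m v, s ≤ u → u < m → m < v → v ≤ t → ‖Ξ u v - Ξ u m - Ξ m v‖ ≤ ω u v ^ γ :=
    fun u m v hu hum hmv hv =>
      norm_outer_germ_sub_le hp hq hX hY (Y s) (hs.trans hu) hum hmv (hv.trans ht)
  have hbase : ‖Ξ s t‖ ≤ V ^ γ := by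
    rw [Real.rpow_add' hV0 (by positivity), mul_comm]
    refine (norm_outer_le _ _).trans (mul_le_mul ?_ ?_ (norm_nonneg _) (by positivity))
    · rw [norm_sub_rev, one_div]
      exact (Real.le_rpow_inv_iff_of_pos (norm_nonneg _) hV0 hq).2 (le_add_of_nonneg_right hω0)
    · exact (hX.norm_sub_le_varCtrl_rpow hp hs le_rfl hst le_rfl ht).trans
        (Real.rpow_le_rpow hX0 ((le_add_of_nonneg_right (hY.isControl.nonneg hs hst.le ht)).trans
          hωV) (by positivity))
  refine hL.norm_le fun P hP => ?_
  obtain ⟨n, c, hc, rfl⟩ := IsPartition.exists_chain hP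
  have hn : 0 < n := Nat.pos_of_ne_zero fun h => hst.ne (hc.zero.symm.trans (h ▸ hc.last))
  calc _ = ‖chainSum Ξ n c‖ := congrArg norm (hc.sum_erase_nextPt Ξ)
    _ ≤ ‖Ξ s t‖ + ‖chainSum Ξ n c - Ξ s t‖ := norm_le_norm_add_norm_sub' _ _
    _ ≤ V ^ γ + (2 * ω s t) ^ γ * ∑' k : ℕ, 1 / ((k : ℝ) + 1) ^ γ :=
        add_le_add hbase (norm_chainSum_sub_le hω hpq hΞ hc hn)
    _ ≤ V ^ γ + (2 * V) ^ γ * ∑' k : ℕ, 1 / ((k : ℝ) + 1) ^ γ := by gcongr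
    _ = youngConst γ * V ^ γ := by
        rw [youngConst, Real.mul_rpow zero_le_two hV0]
        ring

end Young

lemma sum_rpow_le_rpow_sum {ι : Type*} (s : Finset ι) {f : ι → ℝ} (hf : ∀ i ∈ s, 0 ≤ f i) {r : ℝ}
    (hr : 1 ≤ r) : ∑ i ∈ s, f i ^ r ≤ (∑ i ∈ s, f i) ^ r := by
  classical
  induction s using Finset.induction_on with
  | empty => simp [Real.zero_rpow (by linarith : r ≠ 0)]
  | insert a s ha ih =>
    have hf' : ∀ i ∈ s, 0 ≤ f i := fun i hi => hf i (mem_insert_of_mem hi)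
    rw [sum_insert ha, sum_insert ha]
    calc f a ^ r + ∑ i ∈ s, f i ^ r ≤ f a ^ r + (∑ i ∈ s, f i) ^ r := by gcongr; exact ih hf'
      _ ≤ _ := Real.add_rpow_le_rpow_add (hf a (mem_insert_self a s)) (sum_nonneg hf') hr

lemma sum_rpow_le_of_le_mul_rpow {ι : Type*} (s : Finset ι) {f g : ι → ℝ} {C γ θ : ℝ}
    (hC : 0 ≤ C) (hθ : 0 ≤ θ) (hγθ : 1 ≤ γ * θ) (hf : ∀ i ∈ s, 0 ≤ f i) (hg : ∀ i ∈ s, 0 ≤ g i)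
    (hfg : ∀ i ∈ s, f i ≤ C * g i ^ γ) :
    ∑ i ∈ s, f i ^ θ ≤ C ^ θ * (∑ i ∈ s, g i) ^ (γ * θ) := by
  calc ∑ i ∈ s, f i ^ θ ≤ ∑ i ∈ s, C ^ θ * g i ^ (γ * θ) := sum_le_sum fun i hi => by
        rw [Real.rpow_mul (hg i hi), ← Real.mul_rpow hC (Real.rpow_nonneg (hg i hi) _)]
        exact Real.rpow_le_rpow (hf i hi) (hfg i hi) hθ
    _ ≤ C ^ θ * (∑ i ∈ s, g i) ^ (γ * θ) := by
        rw [← mul_sum]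
        exact mul_le_mul_of_nonneg_left (sum_rpow_le_rpow_sum s hg hγθ) (by positivity)

end YoungVariation

open YoungVariation Finset in
theorem young_two_parameter_theta_variation_general
    {d : ℕ} (T p q θ : ℝ) (hp : 1 ≤ p) (hq : 1 ≤ q)
    (hpq : 1 / p + 1 / q > 1) (hθ : 0 < θ) (hθpq : 1 / p + 1 / q ≥ 1 / θ)
    (X Y : ℝ → EuclideanSpace ℝ (Fin d))
    (hYc : Cadlag Y 0 T)
    (hXv : HasFiniteVar X p 0 T) (hYv : HasFiniteVar Y q 0 T)
    (Z : ℝ → ℝ → (Fin d → Fin d → ℝ))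
    (hZ : ∀ s t : ℝ, 0 ≤ s → s < t → t ≤ T →
      RRSTendsto s t
        (fun P => ∑ x ∈ P.erase t,
          (fun i j => (minus Y 0 x i - Y s i) * (X (nextPt P t x) j - X x j)
            : Fin d → Fin d → ℝ))
        (Z s t)) :
    HasFiniteVar2 Z θ 0 T := by
  have hp0 : 0 < p := by linarith
  have hq0 : 0 < q := by linarith
  set γ := 1 / p + 1 / q
  have hγθ : 1 ≤ γ * θ := by rwa [ge_iff_le, div_le_iff₀ hθ] at hθpq
  obtain ⟨MX, hX⟩ := hXv.exists_varBoundedOn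
  obtain ⟨MY, hY⟩ := hYv.exists_varBoundedOn
  have hYm := hY.minus hYc hq0
  refine ⟨youngConst γ ^ θ * (MY + (MX + MY)) ^ (γ * θ), fun P hP => ?_⟩
  obtain ⟨n, c, hc, rfl⟩ := IsPartition.exists_chain hP
  set v : ℝ → ℝ → ℝ := fun x y => ‖jump Y 0 x‖ ^ q + (varCtrl X p + varCtrl (minus Y 0) q) x y
  have hstep : ∀ i ∈ range n, 0 ≤ c i ∧ c i < c (i + 1) ∧ c (i + 1) ≤ T := fun i hi =>
    ⟨(hc.mem_Icc (mem_range.1 hi).le).1, hc.lt_succ i (mem_range.1 hi),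
      (hc.mem_Icc (mem_range.1 hi)).2⟩
  have hv0 : ∀ i ∈ range n, 0 ≤ v (c i) (c (i + 1)) := fun i hi =>
    have ⟨hs, hst, ht⟩ := hstep i hi
    add_nonneg (by positivity) ((hX.isControl.add hYm.isControl).nonneg hs hst.le ht)
  have hZ_le : ∀ i ∈ range n, ‖Z (c i) (c (i + 1))‖ ≤ youngConst γ * v (c i) (c (i + 1)) ^ γ :=
    fun i hi =>
      have ⟨hs, hst, ht⟩ := hstep i hi
      norm_young_le hp0 hq0 hpq hX hYm hs hst ht (hZ _ _ hs hst ht)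
  calc varSum2 Z θ T ((range (n + 1)).image c) = ∑ i ∈ range n, ‖Z (c i) (c (i + 1))‖ ^ θ :=
        hc.sum_erase_nextPt fun x y => ‖Z x y‖ ^ θ
    _ ≤ youngConst γ ^ θ * chainSum v n c ^ (γ * θ) :=
        sum_rpow_le_of_le_mul_rpow _ (youngConst_nonneg γ) hθ.le hγθ (fun _ _ => norm_nonneg _)
          hv0 hZ_le
    _ ≤ _ := mul_le_mul_of_nonneg_left (Real.rpow_le_rpow (sum_nonneg hv0)
          (chainSum_jump_add_varCtrl_le hX hY hYc hq0 hc) (by linarith))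
          (Real.rpow_nonneg (youngConst_nonneg γ) _)

/-- If `X, Y` are càdlàg of finite `p`- resp. `q`-variation with
`1/p + 1/q > 1`, then for any `θ > 0` with `1/p + 1/q ≥ 1/θ` the Young integral
`Z_{s,t} = ∫_{(s,t]} (Y_{r-} − Y_s) ⊗ dX_r` (defined as refinement-Riemann–Stieltjes limit
of left-point Riemann sums) has finite `θ`-variation. -/
theorem young_two_parameter_theta_variation
    {d : ℕ} (T p q θ : ℝ) (hT : 0 < T) (hp : 1 ≤ p) (hq : 1 ≤ q)
    (hpq : 1 / p + 1 / q > 1) (hθ : 0 < θ) (hθpq : 1 / p + 1 / q ≥ 1 / θ)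
    (X Y : ℝ → EuclideanSpace ℝ (Fin d))
    (hXc : Cadlag X 0 T) (hYc : Cadlag Y 0 T)
    (hXv : HasFiniteVar X p 0 T) (hYv : HasFiniteVar Y q 0 T)
    (Z : ℝ → ℝ → (Fin d → Fin d → ℝ))
    (hZ : ∀ s t : ℝ, 0 ≤ s → s < t → t ≤ T →
      RRSTendsto s t
        (fun P => ∑ x ∈ P.erase t,
          (fun i j => (minus Y 0 x i - Y s i) * (X (nextPt P t x) j - X x j)
            : Fin d → Fin d → ℝ))
        (Z s t)) :
    HasFiniteVar2 Z θ 0 T :=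
  young_two_parameter_theta_variation_general T p q θ hp hq hpq hθ hθpq X Y hYc hXv hYv Z hZ
end
end

section
/- Let X be a d-dimensional compound Poisson process X_t = ∑_{i=1}^{N_t} J_i with i.i.d. jumps J_i ∈ ℝ^d having finite moments of all orders, and N an independent Poisson process of intensity λ. Then the expected (Marcus/minimal-jump) signature of X on [0,1], truncated at level N, satisfies E[S^N(X)_{0,1}] = exp^{(N)}( λ (E[exp^{(N)}(J)] − 1) ) in the truncated tensor algebra T^{(N)}(ℝ^d). -/
open scoped BigOperators
open MeasureTheory

noncomputable section

/-- Truncated (at level `N`) tensor-algebra multiplication, in the model of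
`T^{(N)}(ℝ^d)` as real-valued functions on words over the alphabet `Fin d`. -/
noncomputable def taMul (N : ℕ) {d : ℕ} (x y : List (Fin d) → ℝ) : List (Fin d) → ℝ :=
  fun w => if w.length ≤ N then
    ∑ i ∈ Finset.range (w.length + 1), x (w.take i) * y (w.drop i) else 0

/-- The unit of the tensor algebra. -/
def taOne {d : ℕ} : List (Fin d) → ℝ := fun w => if w = [] then 1 else 0

/-- Powers in the truncated tensor algebra. -/
noncomputable def taPow (N : ℕ) {d : ℕ} (x : List (Fin d) → ℝ) : ℕ → (List (Fin d) → ℝ)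
  | 0 => taOne
  | k + 1 => taMul N x (taPow N x k)

/-- Truncated tensor exponential `exp^{(N)}(x) = ∑_{k=0}^N x^{⊗k}/k!`. -/
noncomputable def taExp (N : ℕ) {d : ℕ} (x : List (Fin d) → ℝ) : List (Fin d) → ℝ :=
  fun w => ∑ k ∈ Finset.range (N + 1), ((k.factorial : ℝ))⁻¹ * taPow N x k w

/-- Truncated tensor logarithm `log^{(N)}(x) = ∑_{k=1}^N (−1)^{k+1}/k (x−1)^{⊗k}`. -/
noncomputable def taLog (N : ℕ) {d : ℕ} (x : List (Fin d) → ℝ) : List (Fin d) → ℝ :=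
  fun w => ∑ k ∈ Finset.Icc 1 N,
    ((-1 : ℝ)) ^ (k + 1) / k * taPow N (fun u => x u - taOne u) k w

/-- Inverse in the group `T₁^{(N)}`: `(1+g)⁻¹ = ∑_k (−g)^{⊗k}`. -/
noncomputable def taInv (N : ℕ) {d : ℕ} (x : List (Fin d) → ℝ) : List (Fin d) → ℝ :=
  fun w => ∑ k ∈ Finset.range (N + 1), ((-1 : ℝ)) ^ k * taPow N (fun u => x u - taOne u) k w

/-- Embedding of `ℝ^d` as 1-tensors. -/
def taInj {d : ℕ} (v : Fin d → ℝ) : List (Fin d) → ℝ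
  | [i] => v i
  | _ => 0

/-- Embedding of a matrix as a 2-tensor. -/
def ta2 {d : ℕ} (a : Fin d → Fin d → ℝ) : List (Fin d) → ℝ
  | [i, j] => a i j
  | _ => 0

/-- Homogeneous norm `‖1+g‖ = ∑_{k=1}^N |g^k|^{1/k}` on the truncated tensor algebra,
equivalent to the Carnot–Carathéodory norm on group-like elements. -/
noncomputable def taHomNorm (N : ℕ) {d : ℕ} (x : List (Fin d) → ℝ) : ℝ :=
  ∑ k ∈ Finset.Icc 1 N, (∑ f : Fin k → Fin d, |x (List.ofFn f)|) ^ ((k : ℝ)⁻¹)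


/-! Conditionally on `N₁ = n` the signature is the ordered product of the `n` independent
factors `exp(J_i)`, so its expectation is `A^{⊗n}` with `A = E[exp^{(N)}(J)]`.
Write `A = 1 + g`; since `g` vanishes on the empty word, `g^{⊗k}(w) = 0` for `k > |w|`, so
the binomial expansion `A^{⊗n}(w) = ∑_{k ≤ |w|} C(n,k) g^{⊗k}(w)` is a finite sum, and the
Poisson identity `∑_n e^{-λ} λ^n/n! C(n,k) = λ^k/k!` turns the mixture over `n` into
`∑_k λ^k g^{⊗k}(w)/k! = exp^{(N)}(λ g)(w)`. The exchange of sum and expectation is justified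
by running the same computation for `E|exp^{(N)}(J)|`. -/

open Finset ProbabilityTheory

section TruncatedTensorAlgebra

variable {N d : ℕ}

lemma taOne_of_ne_nil {u : List (Fin d)} (hu : u ≠ []) : taOne u = 0 := if_neg hu

lemma taMul_of_length_le (x y : List (Fin d) → ℝ) {u : List (Fin d)} (hu : u.length ≤ N) :
    taMul N x y u = ∑ i ∈ range (u.length + 1), x (u.take i) * y (u.drop i) := if_pos hu

lemma taMul_of_lt_length (x y : List (Fin d) → ℝ) {u : List (Fin d)} (hu : N < u.length) :
    taMul N x y u = 0 := if_neg hu.not_ge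

lemma taPow_of_lt_length (x : List (Fin d) → ℝ) (k : ℕ) {u : List (Fin d)}
    (hu : N < u.length) : taPow N x k u = 0 := by
  cases k with
  | zero => exact taOne_of_ne_nil (List.ne_nil_of_length_pos (by omega))
  | succ k => exact taMul_of_lt_length _ _ hu

lemma taMul_taOne_left (y : List (Fin d) → ℝ) {u : List (Fin d)} (hu : u.length ≤ N) :
    taMul N taOne y u = y u := by
  rw [taMul_of_length_le _ _ hu, sum_eq_single 0]
  · simp [taOne]
  · intro i hi hi0
    refine mul_eq_zero_of_left (taOne_of_ne_nil fun h => ?_) _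
    rcases List.take_eq_nil_iff.mp h with h | rfl
    · exact hi0 h
    · simp_all
  · simp

lemma taMul_add_left (x x' y : List (Fin d) → ℝ) (u : List (Fin d)) :
    taMul N (fun w => x w + x' w) y u = taMul N x y u + taMul N x' y u := by
  unfold taMul
  split_ifs
  · simp only [add_mul, sum_add_distrib]
  · simp

lemma taMul_sum_right {ι : Type*} (s : Finset ι) (c : ι → ℝ) (x : List (Fin d) → ℝ)
    (y : ι → List (Fin d) → ℝ) (u : List (Fin d)) :
    taMul N x (fun w => ∑ k ∈ s, c k * y k w) u = ∑ k ∈ s, c k * taMul N x (y k) u := by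
  unfold taMul
  split_ifs
  · simp only [mul_sum]
    rw [sum_comm]
    exact sum_congr rfl fun _ _ => sum_congr rfl fun _ _ => by ring
  · simp

lemma taPow_smul (c : ℝ) (g : List (Fin d) → ℝ) (k : ℕ) (u : List (Fin d)) :
    taPow N (fun w => c * g w) k u = c ^ k * taPow N g k u := by
  induction k generalizing u with
  | zero => simp [taPow]
  | succ k ih =>
    unfold taPow taMul
    split_ifs
    · simp only [ih, mul_sum]
      exact sum_congr rfl fun _ _ => by ring
    · simp

lemma taPow_one_add (g : List (Fin d) → ℝ) (n : ℕ) (u : List (Fin d)) :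
    taPow N (fun w => taOne w + g w) n u =
      ∑ k ∈ range (n + 1), (n.choose k : ℝ) * taPow N g k u := by
  induction n generalizing u with
  | zero => simp [taPow]
  | succ n ih =>
    rcases le_or_gt u.length N with hu | hu
    · have hpow : taPow N (fun w => taOne w + g w) n =
          fun w => ∑ k ∈ range (n + 1), (n.choose k : ℝ) * taPow N g k w := funext ih
      rw [taPow, hpow, taMul_add_left, taMul_taOne_left _ hu, taMul_sum_right,
        sum_choose_succ_mul (fun k _ => taPow N g k u)]
      rfl
    · simp [taPow_of_lt_length _ _ hu]

lemma taPow_eq_zero_of_length_lt {g : List (Fin d) → ℝ} (hg : g [] = 0) {k : ℕ}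
    {u : List (Fin d)} (hk : u.length < k) : taPow N g k u = 0 := by
  induction k generalizing u with
  | zero => omega
  | succ k ih =>
    unfold taPow taMul
    split_ifs
    · refine sum_eq_zero fun i hi => ?_
      rcases Nat.eq_zero_or_pos i with rfl | hi0
      · simp [hg]
      · rw [ih (by simp at hi ⊢; omega), mul_zero]
    · rfl

lemma taMul_taInj_nil (v : Fin d → ℝ) (y : List (Fin d) → ℝ) :
    taMul N (taInj v) y [] = 0 := by
  simp [taMul, taInj]

lemma taMul_taInj_cons (v : Fin d → ℝ) (y : List (Fin d) → ℝ) (a : Fin d)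
    (t : List (Fin d)) :
    taMul N (taInj v) y (a :: t) = if t.length + 1 ≤ N then v a * y t else 0 := by
  rw [taMul, List.length_cons]
  split_ifs with h
  · rw [sum_eq_single 1]
    · rfl
    · intro i hi hi1
      match i, t with
      | 0, _ => simp [taInj]
      | j + 2, [] => simp at hi
      | j + 2, b :: t' => simp [taInj]
    · simp
  · rfl

lemma taPow_taInj (v : Fin d → ℝ) (k : ℕ) (u : List (Fin d)) :
    taPow N (taInj v) k u = if u.length = k ∧ u.length ≤ N then (u.map v).prod else 0 := by
  induction k generalizing u with
  | zero => cases u <;> simp [taPow, taOne]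
  | succ k ih =>
    cases u with
    | nil => simp [taPow, taMul_taInj_nil]
    | cons a t =>
      rw [taPow, taMul_taInj_cons, ih]
      simp only [List.length_cons, List.map_cons, List.prod_cons, Nat.add_right_cancel_iff]
      split_ifs <;> first | omega | simp

lemma taExp_taInj (v : Fin d → ℝ) (u : List (Fin d)) :
    taExp N (taInj v) u =
      if u.length ≤ N then (u.length.factorial : ℝ)⁻¹ * (u.map v).prod else 0 := by
  simp only [taExp, taPow_taInj]
  split_ifs with hu
  · rw [sum_eq_single u.length]
    · simp [hu]
    · intro k _ hk
      simp [Ne.symm hk]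
    · simp; omega
  · simp [hu]

lemma abs_prod_map_le_norm_pow (v : Fin d → ℝ) (u : List (Fin d)) :
    |(u.map v).prod| ≤ ‖v‖ ^ u.length := by
  induction u with
  | nil => simp
  | cons a t ih =>
    rw [List.map_cons, List.prod_cons, abs_mul, List.length_cons, pow_succ']
    exact mul_le_mul (by simpa using norm_le_pi_norm v a) ih (abs_nonneg _) (norm_nonneg _)

lemma abs_taExp_taInj_le (v : Fin d → ℝ) (u : List (Fin d)) :
    |taExp N (taInj v) u| ≤ ‖v‖ ^ u.length := by
  rw [taExp_taInj]
  split_ifs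
  · rw [abs_mul, abs_of_pos (by positivity)]
    refine (mul_le_of_le_one_left (abs_nonneg _) (inv_le_one_of_one_le₀ ?_)).trans
      (abs_prod_map_le_norm_pow v u)
    exact_mod_cast Nat.one_le_iff_ne_zero.mpr (Nat.factorial_ne_zero _)
  · simp [norm_nonneg]

end TruncatedTensorAlgebra

section PoissonMixture

variable {N d : ℕ}

lemma sum_range_mul_taPow_eq_sum_range_length {g : List (Fin d) → ℝ} (hg : g [] = 0)
    (c : ℕ → ℝ) {m : ℕ} {w : List (Fin d)} (hc : ∀ k ≥ m, c k * taPow N g k w = 0) :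
    ∑ k ∈ range m, c k * taPow N g k w =
      ∑ k ∈ range (w.length + 1), c k * taPow N g k w := by
  have hw : ∀ k ≥ w.length + 1, c k * taPow N g k w = 0 := fun k hk => by
    rw [taPow_eq_zero_of_length_lt hg (by omega), mul_zero]
  rw [← eventually_constant_sum hc (le_max_left _ _),
    eventually_constant_sum hw (le_max_right m _)]

lemma taExp_eq_sum_range_length {g : List (Fin d) → ℝ} (hg : g [] = 0) (w : List (Fin d)) :
    taExp N g w = ∑ k ∈ range (w.length + 1), (k.factorial : ℝ)⁻¹ * taPow N g k w := by
  refine sum_range_mul_taPow_eq_sum_range_length hg _ fun k hk => ?_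
  rcases le_or_gt w.length N with hw | hw
  · rw [taPow_eq_zero_of_length_lt hg (by omega), mul_zero]
  · rw [taPow_of_lt_length _ _ hw, mul_zero]

lemma taPow_one_add_eq_sum_range_length {g : List (Fin d) → ℝ} (hg : g [] = 0) (n : ℕ)
    (w : List (Fin d)) :
    taPow N (fun u => taOne u + g u) n w =
      ∑ k ∈ range (w.length + 1), (n.choose k : ℝ) * taPow N g k w := by
  rw [taPow_one_add]
  exact sum_range_mul_taPow_eq_sum_range_length hg _ fun k hk => by
    rw [Nat.choose_eq_zero_of_lt (by omega), Nat.cast_zero, zero_mul]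

lemma hasSum_poisson_mul_choose (lam : ℝ) (k : ℕ) :
    HasSum (fun n : ℕ => Real.exp (-lam) * lam ^ n / n.factorial * (n.choose k : ℝ))
      (lam ^ k / k.factorial) := by
  have hexp : HasSum (fun m : ℕ => lam ^ m / m.factorial) (Real.exp lam) := by
    rw [Real.exp_eq_exp_ℝ]
    exact NormedSpace.expSeries_div_hasSum_exp lam
  have hval :
      Real.exp (-lam) * lam ^ k / k.factorial * Real.exp lam = lam ^ k / k.factorial := by
    rw [Real.exp_neg]
    field_simp
  have h := hexp.mul_left (Real.exp (-lam) * lam ^ k / k.factorial)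
  rw [hval] at h
  rw [← hasSum_nat_add_iff' k, sum_eq_zero fun n hn => by
    rw [Nat.choose_eq_zero_of_lt (mem_range.mp hn), Nat.cast_zero, mul_zero], sub_zero]
  refine h.congr_fun fun m => ?_
  rw [← Nat.choose_symm_add, Nat.cast_add_choose, pow_add, Real.exp_neg]
  field_simp

lemma hasSum_poisson_mul_taPow (lam : ℝ) {a : List (Fin d) → ℝ} (ha : a [] = 1)
    (w : List (Fin d)) :
    HasSum (fun n : ℕ => Real.exp (-lam) * lam ^ n / n.factorial * taPow N a n w)
      (taExp N (fun u => lam * (a u - taOne u)) w) := by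
  set g : List (Fin d) → ℝ := fun u => a u - taOne u
  have hg : g [] = 0 := by simp [g, ha, taOne]
  have hpow (n : ℕ) : taPow N a n w =
      ∑ k ∈ range (w.length + 1), (n.choose k : ℝ) * taPow N g k w := by
    rw [← taPow_one_add_eq_sum_range_length hg]
    congr
    funext u
    ring
  have hexp : taExp N (fun u => lam * g u) w =
      ∑ k ∈ range (w.length + 1), lam ^ k / k.factorial * taPow N g k w := by
    rw [taExp_eq_sum_range_length (by simp [hg])]
    exact sum_congr rfl fun k _ => by rw [taPow_smul]; ring
  rw [hexp]
  simp only [hpow, mul_sum]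
  exact (hasSum_sum fun k _ => (hasSum_poisson_mul_choose lam k).mul_right (taPow N g k w))
    |>.congr_fun fun n => sum_congr rfl fun _ _ => by ring

end PoissonMixture

section Products

variable {N d : ℕ}

def taProd (N : ℕ) (x : ℕ → List (Fin d) → ℝ) (n : ℕ) : List (Fin d) → ℝ :=
  (List.range n).foldr (fun i acc => taMul N (x i) acc) taOne

lemma taProd_zero (x : ℕ → List (Fin d) → ℝ) : taProd N x 0 = taOne := rfl

lemma taProd_succ (x : ℕ → List (Fin d) → ℝ) (n : ℕ) :
    taProd N x (n + 1) = taMul N (x 0) (taProd N (fun i => x (i + 1)) n) := by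
  simp [taProd, List.range_succ_eq_map, List.foldr_map]

lemma taProd_const (a : List (Fin d) → ℝ) (n : ℕ) :
    taProd N (fun _ => a) n = taPow N a n := by
  induction n with
  | zero => rfl
  | succ n ih => rw [taProd_succ, ih, taPow]

lemma abs_taMul_le (x : List (Fin d) → ℝ) {y y' : List (Fin d) → ℝ}
    (hy : ∀ u, |y u| ≤ y' u) (u : List (Fin d)) :
    |taMul N x y u| ≤ taMul N (fun u => |x u|) y' u := by
  unfold taMul
  split_ifs
  · refine (abs_sum_le_sum_abs _ _).trans (sum_le_sum fun i _ => ?_)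
    rw [abs_mul]
    exact mul_le_mul_of_nonneg_left (hy _) (abs_nonneg _)
  · simp

lemma abs_taProd_le (x : ℕ → List (Fin d) → ℝ) (n : ℕ) (u : List (Fin d)) :
    |taProd N x n u| ≤ taProd N (fun i u => |x i u|) n u := by
  induction n generalizing x u with
  | zero =>
    rw [taProd_zero, taProd_zero]
    unfold taOne
    split_ifs <;> simp
  | succ n ih =>
    rw [taProd_succ, taProd_succ]
    exact abs_taMul_le _ (ih _) u

end Products

section Measurability

variable {N d : ℕ} {α : Type*} [MeasurableSpace α]

lemma Measurable.taMul {x y : α → List (Fin d) → ℝ} (hx : Measurable x) (hy : Measurable y) :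
    Measurable fun a => taMul N (x a) (y a) := by
  refine measurable_pi_lambda _ fun u => ?_
  unfold _root_.taMul
  split_ifs
  · exact Finset.measurable_sum _ fun i _ =>
      ((measurable_pi_apply _).comp hx).mul ((measurable_pi_apply _).comp hy)
  · exact measurable_const

lemma Measurable.taPow {x : α → List (Fin d) → ℝ} (hx : Measurable x) (k : ℕ) :
    Measurable fun a => taPow N (x a) k := by
  induction k with
  | zero => exact measurable_const
  | succ k ih => exact hx.taMul ih

lemma Measurable.taExp {x : α → List (Fin d) → ℝ} (hx : Measurable x) :
    Measurable fun a => taExp N (x a) :=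
  measurable_pi_lambda _ fun u => Finset.measurable_sum _ fun k _ =>
    ((measurable_pi_apply u).comp (hx.taPow k)).const_mul _

lemma measurable_taInj : Measurable (taInj : (Fin d → ℝ) → List (Fin d) → ℝ) :=
  measurable_pi_lambda _ fun u =>
    match u with
    | [] => measurable_const
    | [i] => measurable_pi_apply i
    | _ :: _ :: _ => measurable_const

lemma measurable_taProd (n : ℕ) :
    Measurable fun x : ℕ → List (Fin d) → ℝ => taProd N x n := by
  induction n with
  | zero => exact measurable_const
  | succ n ih =>
    simp only [taProd_succ]
    exact (measurable_pi_apply 0).taMul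
      (ih.comp (measurable_pi_lambda _ fun i => measurable_pi_apply (i + 1)))

end Measurability

lemma ProbabilityTheory.iIndepFun.indepFun_zero_shift {Ω β : Type*} [MeasurableSpace Ω]
    [MeasurableSpace β] {μ : Measure Ω} {X : ℕ → Ω → β} (hX : ∀ i, Measurable (X i))
    (h : iIndepFun X μ) : IndepFun (X 0) (fun ω i => X (i + 1) ω) μ := by
  rw [IndepFun_iff_Indep]
  have hsplit := indep_iSup_of_disjoint (fun i => (hX i).comap_le) h.iIndep
    (S := {0}) (T := {i | i ≠ 0}) (by simp)
  refine indep_of_indep_of_le_right (indep_of_indep_of_le_left hsplit ?_) ?_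
  · exact le_biSup (fun i => MeasurableSpace.comap (X i) _) rfl
  · simp only [MeasurableSpace.pi, MeasurableSpace.comap_iSup, MeasurableSpace.comap_comp]
    exact iSup_le fun i =>
      le_biSup (fun i => MeasurableSpace.comap (X i) _) (Nat.succ_ne_zero i)

section IndependentProducts

variable {N d : ℕ} {Ω : Type*} [MeasurableSpace Ω] {P : Measure Ω}
  {X : ℕ → Ω → List (Fin d) → ℝ}

lemma indepFun_apply_taProd_shift (hX : ∀ i, Measurable (X i)) (hindep : iIndepFun X P)
    (n : ℕ) (u₁ u₂ : List (Fin d)) :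
    IndepFun (fun ω => X 0 ω u₁) (fun ω => taProd N (fun i => X (i + 1) ω) n u₂) P :=
  (hindep.indepFun_zero_shift hX).comp (measurable_pi_apply u₁)
    ((measurable_pi_apply u₂).comp (measurable_taProd n))

lemma integrable_taProd (hX : ∀ i, Measurable (X i)) (hindep : iIndepFun X P)
    (hint : ∀ i u, Integrable (fun ω => X i ω u) P) (n : ℕ) (u : List (Fin d)) :
    Integrable (fun ω => taProd N (fun i => X i ω) n u) P := by
  have := hindep.isProbabilityMeasure
  induction n generalizing X u with
  | zero => exact integrable_const _
  | succ n ih =>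
    simp only [taProd_succ]
    rcases le_or_gt u.length N with hu | hu
    · simp only [taMul_of_length_le _ _ hu]
      exact integrable_finsetSum _ fun i _ =>
        (indepFun_apply_taProd_shift hX hindep n _ _).integrable_mul (hint 0 _)
          (ih (fun i => hX (i + 1)) (hindep.precomp Nat.succ_injective)
            (fun i => hint (i + 1)) _)
    · simp only [taMul_of_lt_length _ _ hu]
      exact integrable_zero _ _ _

lemma integral_taProd (hX : ∀ i, Measurable (X i)) (hindep : iIndepFun X P)
    (hint : ∀ i u, Integrable (fun ω => X i ω u) P) (n : ℕ) (u : List (Fin d)) :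
    ∫ ω, taProd N (fun i => X i ω) n u ∂P =
      taProd N (fun i u => ∫ ω, X i ω u ∂P) n u := by
  have := hindep.isProbabilityMeasure
  induction n generalizing X u with
  | zero => simp [taProd_zero]
  | succ n ih =>
    have hshift := hindep.precomp Nat.succ_injective
    have htail (v : List (Fin d)) := integrable_taProd (N := N) (fun i => hX (i + 1)) hshift
      (fun i => hint (i + 1)) n v
    simp only [taProd_succ]
    rcases le_or_gt u.length N with hu | hu
    · simp only [taMul_of_length_le _ _ hu]
      have hterm (i : ℕ) : Integrable
          (fun ω => X 0 ω (u.take i) * taProd N (fun i => X (i + 1) ω) n (u.drop i)) P :=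
        (indepFun_apply_taProd_shift hX hindep n _ _).integrable_mul (hint 0 _) (htail _)
      rw [integral_finsetSum _ fun i _ => hterm i]
      refine sum_congr rfl fun i _ => ?_
      rw [(indepFun_apply_taProd_shift hX hindep n _ _).integral_fun_mul_eq_mul_integral
        (hint 0 _).aestronglyMeasurable (htail _).aestronglyMeasurable,
        ih (fun i => hX (i + 1)) hshift (fun i => hint (i + 1))]
    · simp only [taMul_of_lt_length _ _ hu, integral_zero]

end IndependentProducts

lemma hasSum_integral_of_indepFun_nat {Ω β : Type*} [MeasurableSpace Ω] [MeasurableSpace β]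
    {P : Measure Ω} [IsFiniteMeasure P] {M : Ω → ℕ} {Y : Ω → β} (hM : Measurable M)
    (hMY : IndepFun M Y P) {Φ : ℕ → β → ℝ} (hΦ : ∀ n, Measurable (Φ n))
    (hint : ∀ n, Integrable (fun ω => Φ n (Y ω)) P)
    (hsum : Summable fun n => P.real {ω | M ω = n} * ∫ ω, |Φ n (Y ω)| ∂P) :
    HasSum (fun n => P.real {ω | M ω = n} * ∫ ω, Φ n (Y ω) ∂P)
      (∫ ω, Φ (M ω) (Y ω) ∂P) := by
  set e : ℕ → Ω → ℝ := fun n ω => ({n} : Set ℕ).indicator 1 (M ω)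
  have he_nonneg (n : ℕ) (ω : Ω) : 0 ≤ e n ω :=
    Set.indicator_nonneg (fun _ _ => zero_le_one) _
  have he_int (n : ℕ) : Integrable (e n) P :=
    (integrable_const (1 : ℝ)).indicator (hM (measurableSet_singleton n))
  have hindep (n : ℕ) {ψ : ℝ → ℝ} (hψ : Measurable ψ) :
      IndepFun (e n) (fun ω => ψ (Φ n (Y ω))) P :=
    hMY.comp (measurable_of_countable (({n} : Set ℕ).indicator 1)) (hψ.comp (hΦ n))
  have hfactor (n : ℕ) {ψ : ℝ → ℝ} (hψ : Measurable ψ)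
      (hψint : Integrable (fun ω => ψ (Φ n (Y ω))) P) :
      ∫ ω, e n ω * ψ (Φ n (Y ω)) ∂P =
        P.real {ω | M ω = n} * ∫ ω, ψ (Φ n (Y ω)) ∂P := by
    rw [(hindep n hψ).integral_fun_mul_eq_mul_integral (he_int n).aestronglyMeasurable
      hψint.aestronglyMeasurable]
    congr
    exact integral_indicator_one (hM (measurableSet_singleton n))
  have hnorm (n : ℕ) : ∫ ω, ‖e n ω * Φ n (Y ω)‖ ∂P =
      P.real {ω | M ω = n} * ∫ ω, |Φ n (Y ω)| ∂P := by
    rw [← hfactor n measurable_abs (hint n).abs]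
    congr with ω
    rw [norm_mul, Real.norm_eq_abs, Real.norm_eq_abs, abs_of_nonneg (he_nonneg n ω)]
  have hsum_eq (ω : Ω) : ∑' n, e n ω * Φ n (Y ω) = Φ (M ω) (Y ω) := by
    rw [tsum_eq_single (M ω) fun n hn => by simp [e, Ne.symm hn]]
    simp [e]
  have hterm (n : ℕ) : Integrable (fun ω => e n ω * Φ n (Y ω)) P :=
    (hindep n measurable_id).integrable_mul (he_int n) (hint n)
  have h := hasSum_integral_of_summable_integral_norm hterm (by simpa only [hnorm] using hsum)
  simp only [hsum_eq] at h
  exact h.congr_fun fun n => (hfactor n measurable_id (hint n)).symm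

section IIDProducts

variable {N d : ℕ} {Ω : Type*} [MeasurableSpace Ω] {P : Measure Ω}
  {X : ℕ → Ω → List (Fin d) → ℝ}

lemma integrable_apply_of_identDistrib (hid : ∀ i, IdentDistrib (X i) (X 0) P P)
    (hint : ∀ u, Integrable (fun ω => X 0 ω u) P) (i : ℕ) (u : List (Fin d)) :
    Integrable (fun ω => X i ω u) P :=
  ((hid i).comp (measurable_pi_apply u)).integrable_iff.mpr (hint u)

lemma integral_taProd_of_identDistrib (hX : ∀ i, Measurable (X i)) (hindep : iIndepFun X P)
    (hid : ∀ i, IdentDistrib (X i) (X 0) P P) (hint : ∀ u, Integrable (fun ω => X 0 ω u) P)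
    (n : ℕ) (u : List (Fin d)) :
    ∫ ω, taProd N (fun i => X i ω) n u ∂P = taPow N (fun u => ∫ ω, X 0 ω u ∂P) n u := by
  rw [integral_taProd hX hindep (integrable_apply_of_identDistrib hid hint), ← taProd_const]
  congr
  funext i u
  exact ((hid i).comp (measurable_pi_apply u)).integral_eq

lemma integral_abs_taProd_le_of_identDistrib (hX : ∀ i, Measurable (X i))
    (hindep : iIndepFun X P) (hid : ∀ i, IdentDistrib (X i) (X 0) P P)
    (hint : ∀ u, Integrable (fun ω => X 0 ω u) P) (n : ℕ) (u : List (Fin d)) :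
    ∫ ω, |taProd N (fun i => X i ω) n u| ∂P ≤
      taPow N (fun u => ∫ ω, |X 0 ω u| ∂P) n u := by
  have habs : Measurable fun x : List (Fin d) → ℝ => fun u => |x u| :=
    measurable_pi_lambda _ fun u => (measurable_pi_apply u).abs
  have hY : ∀ i, Measurable fun ω u => |X i ω u| := fun i => habs.comp (hX i)
  have hYindep := hindep.comp _ fun _ => habs
  have hYid (i : ℕ) := (hid i).comp habs
  rw [← integral_taProd_of_identDistrib hY hYindep hYid fun u => (hint u).abs]
  exact integral_mono
    (integrable_taProd hX hindep (integrable_apply_of_identDistrib hid hint) n u).abs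
    (integrable_taProd hY hYindep
      (integrable_apply_of_identDistrib hYid fun u => (hint u).abs) n u)
    fun _ => abs_taProd_le _ _ _

theorem integral_taProd_poisson (hX : ∀ i, Measurable (X i)) (hindep : iIndepFun X P)
    (hid : ∀ i, IdentDistrib (X i) (X 0) P P) (hint : ∀ u, Integrable (fun ω => X 0 ω u) P)
    (hone : ∀ ω, X 0 ω [] = 1) {lam : ℝ} {M : Ω → ℕ} (hM : Measurable M)
    (hMX : IndepFun M (fun ω i => X i ω) P)
    (hpoisson : ∀ n, P.real {ω | M ω = n} = Real.exp (-lam) * lam ^ n / n.factorial)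
    (w : List (Fin d)) :
    ∫ ω, taProd N (fun i => X i ω) (M ω) w ∂P =
      taExp N (fun u => lam * (∫ ω, X 0 ω u ∂P - taOne u)) w := by
  have := hindep.isProbabilityMeasure
  -- the dominating series is the same Poisson mixture for `E|X 0|`, again `1` at the empty word
  have hsum : Summable fun n =>
      P.real {ω | M ω = n} * ∫ ω, |taProd N (fun i => X i ω) n w| ∂P := by
    refine .of_nonneg_of_le
      (fun n => mul_nonneg measureReal_nonneg (integral_nonneg fun _ => abs_nonneg _))
      (fun n => mul_le_mul_of_nonneg_left
        (integral_abs_taProd_le_of_identDistrib hX hindep hid hint n w) measureReal_nonneg) ?_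
    simp only [hpoisson]
    exact (hasSum_poisson_mul_taPow lam (by simp [hone]) w).summable
  have h := hasSum_integral_of_indepFun_nat hM hMX (Φ := fun n x => taProd N x n w)
    (fun n => (measurable_pi_apply w).comp (measurable_taProd n))
    (fun n => integrable_taProd hX hindep (integrable_apply_of_identDistrib hid hint) n w) hsum
  simp only [hpoisson, integral_taProd_of_identDistrib hX hindep hid hint] at h
  exact h.unique (hasSum_poisson_mul_taPow lam (by simp [hone]) w)

end IIDProducts

lemma integrable_taExp_taInj {N d : ℕ} {Ω : Type*} [MeasurableSpace Ω] {P : Measure Ω}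
    {J : Ω → Fin d → ℝ} (hJ : AEMeasurable J P) {u : List (Fin d)}
    (hmom : Integrable (fun ω => ‖J ω‖ ^ u.length) P) :
    Integrable (fun ω => taExp N (taInj (J ω)) u) P :=
  hmom.mono' ((measurable_pi_apply u).comp measurable_taInj.taExp |>.comp_aemeasurable hJ
    |>.aestronglyMeasurable) (ae_of_all _ fun _ => abs_taExp_taInj_le _ _)

theorem compound_poisson_expected_signature_general
    {d N : ℕ} {Ω : Type*} [MeasurableSpace Ω] (P : Measure Ω)
    (lam : ℝ) (hlam : 0 < lam)
    (J : ℕ → Ω → (Fin d → ℝ)) (hJmeas : ∀ i, Measurable (J i))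
    (hJid : ∀ i, IdentDistrib (J i) (J 0) P P)
    (hJindep : iIndepFun J P)
    (hJmom : ∀ m : ℕ, Integrable (fun ω => ‖J 0 ω‖ ^ m) P)
    (N₁ : Ω → ℕ) (hNmeas : Measurable N₁)
    (hPoisson : ∀ k : ℕ,
      P {ω | N₁ ω = k} = ENNReal.ofReal (Real.exp (-lam) * lam ^ k / k.factorial))
    (hNJindep : IndepFun N₁ (fun ω i => J i ω) P) :
    ∀ w : List (Fin d),
      (∫ ω, ((List.range (N₁ ω)).foldr
          (fun i acc => taMul N (taExp N (taInj (J i ω))) acc) taOne) w ∂P) =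
        taExp N (fun u => lam * ((∫ ω, taExp N (taInj (J 0 ω)) u ∂P) - taOne u)) w := by
  have hexp : Measurable fun v : Fin d → ℝ => taExp N (taInj v) := measurable_taInj.taExp
  exact integral_taProd_poisson (X := fun i ω => taExp N (taInj (J i ω)))
    (fun i => hexp.comp (hJmeas i)) (hJindep.comp _ fun _ => hexp) (fun i => (hJid i).comp hexp)
    (fun u => integrable_taExp_taInj (hJmeas 0).aemeasurable (hJmom u.length))
    (fun _ => by simp [taExp_taInj]) hNmeas
    (hNJindep.comp measurable_id
      (measurable_pi_lambda _ fun i => hexp.comp (measurable_pi_apply i)))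
    (fun n => by rw [measureReal_def, hPoisson, ENNReal.toReal_ofReal (by positivity)])

/-- Let `X_t = ∑_{i=1}^{N_t} J_i` be a `d`-dimensional compound Poisson
process with i.i.d. jumps `J_i` having moments of all orders and an independent Poisson
process `N` of intensity `λ`.  Conditionally on `N_1 = n` the Marcus signature on `[0,1]` is
`exp(J_1) ⊗ ⋯ ⊗ exp(J_n)`; its expectation, truncated at level `N`, equals
`exp^{(N)}(λ(E[exp^{(N)}(J)] − 1))` in `T^{(N)}(ℝ^d)`. -/
theorem compound_poisson_expected_signature
    {d N : ℕ} {Ω : Type*} [MeasurableSpace Ω] (P : Measure Ω) [IsProbabilityMeasure P]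
    (lam : ℝ) (hlam : 0 < lam)
    (J : ℕ → Ω → (Fin d → ℝ)) (hJmeas : ∀ i, Measurable (J i))
    (hJid : ∀ i, IdentDistrib (J i) (J 0) P P)
    (hJindep : iIndepFun J P)
    (hJmom : ∀ m : ℕ, Integrable (fun ω => ‖J 0 ω‖ ^ m) P)
    (N₁ : Ω → ℕ) (hNmeas : Measurable N₁)
    (hPoisson : ∀ k : ℕ,
      P {ω | N₁ ω = k} = ENNReal.ofReal (Real.exp (-lam) * lam ^ k / k.factorial))
    (hNJindep : IndepFun N₁ (fun ω i => J i ω) P) :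
    ∀ w : List (Fin d),
      (∫ ω, ((List.range (N₁ ω)).foldr
          (fun i acc => taMul N (taExp N (taInj (J i ω))) acc) taOne) w ∂P) =
        taExp N (fun u => lam * ((∫ ω, taExp N (taInj (J 0 ω)) u ∂P) - taOne u)) w :=
  compound_poisson_expected_signature_general P lam hlam J hJmeas hJid hJindep hJmom N₁ hNmeas
    hPoisson hNJindep
end
end
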